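/- arXiv:math-ph/0503066 — 8 statements merged into one kernel-verified Lean document; each statement's English description precedes it below -/
import Mathlib

section
/- Let h, τ, (μ_i), χ, and the derived data δ_i, ℓ_i, ξ_i, a_i, R_i, D, ψ̂_{i,m,n}, ψ_{i,m,n}, μ_{i,m,n} be as in the context. Then: (0) ξ_i = π⁴·h(μ_i)²/(μ_i·τ(μ_i)²) for every i, the series Σ_{i≥1} ℓ_i·δ_i converges (the domain D has finite area), and Σ_{i≥1} ℓ_i·δ_i·h(μ_i) = Σ_{i≥1} τ(μ_i) < ∞. Moreover there exists a constant C > 0 (depending only on χ) such that for all integers i, m, n, m', n' ≥ 1: (i) (∫_{R_i} (Δψ̂_{i,m,n} + μ_{i,m,n}·ψ̂_{i,m,n})² )^{1/2} ≤ C·m·ξ_i·(∫_{R_i} ψ̂_{i,m,n}²)^{1/2}; (ii) if n ≠ n' then ∫_{ℝ²} ψ_{i,m,n}·ψ_{i,m',n'} = 0, and ∫_{ℝ²} ψ_{i,m,n}·ψ_{i',m',n'} = 0 whenever i ≠ i'; (iii) if m ≠ m' then |∫_{ℝ²} ψ_{i,m,n}·ψ_{i,m',n}| ≤ C·min(1/1000,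 1/|m−m'|)·‖ψ_{i,m,n}‖_{L²(ℝ²)}·‖ψ_{i,m',n}‖_{L²(ℝ²)}; (iv) ψ_{i,m,n} vanishes identically outside R_i, and for every compact set K ⊆ D there exists i₀ such that for all i ≥ i₀ and all m, n ≥ 1, ∫_{D∖K} ψ_{i,m,n}² = ∫_{ℝ²} ψ_{i,m,n}². -/
open Real MeasureTheory Filter intervalIntegral Set


lemma aux_int_cos (c : ℝ) (hc : c ≠ 0) :
    ∫ u in (0:ℝ)..1, Real.cos (c * u) = Real.sin c / c := by
  rw [intervalIntegral.integral_comp_mul_left Real.cos hc]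
  simp [integral_cos, div_eq_inv_mul]

lemma aux_sin_pi_nat (n : ℕ) : Real.sin (π * n) = 0 := by
  rw [mul_comm]; exact Real.sin_nat_mul_pi n

lemma aux_pi_nat_ne (n : ℕ) (hn : 1 ≤ n) : (π * (n:ℝ)) ≠ 0 := by
  have := Real.pi_pos
  have : (0:ℝ) < n := by exact_mod_cast hn
  positivity

lemma aux_int_sin_sq (n : ℕ) (hn : 1 ≤ n) :
    ∫ u in (0:ℝ)..1, Real.sin (π * n * u) ^ 2 = 1 / 2 := by
  rw [intervalIntegral.integral_comp_mul_left (fun x => Real.sin x ^ 2) (aux_pi_nat_ne n hn)]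
  rw [integral_sin_sq]
  have h0 : Real.sin (π * (n:ℝ)) = 0 := aux_sin_pi_nat n
  have hne : (π * (n:ℝ)) ≠ 0 := aux_pi_nat_ne n hn
  rw [mul_zero, mul_one]
  simp only [smul_eq_mul, h0, Real.sin_zero, zero_mul, sub_zero, mul_zero, zero_add]
  field_simp [h0]

lemma aux_sin_mul_sin (A B : ℝ) :
    Real.sin A * Real.sin B = (Real.cos (A - B) - Real.cos (A + B)) / 2 := by
  rw [Real.cos_sub, Real.cos_add]; ring

lemma aux_sin_int_pi (k : ℤ) : Real.sin (π * k) = 0 := by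
  rw [mul_comm]; exact Real.sin_int_mul_pi k

lemma aux_int_sin_orth (n n' : ℕ) (hn : 1 ≤ n) (hn' : 1 ≤ n') (hne : n ≠ n') :
    ∫ u in (0:ℝ)..1, Real.sin (π * n * u) * Real.sin (π * n' * u) = 0 := by
  have hcongr : ∀ u : ℝ, Real.sin (π * n * u) * Real.sin (π * n' * u)
      = Real.cos ((π * ((n:ℝ) - n')) * u) / 2 - Real.cos ((π * ((n:ℝ) + n')) * u) / 2 := by
    intro u
    rw [aux_sin_mul_sin]
    ring_nf
  rw [intervalIntegral.integral_congr (g := fun u => Real.cos ((π * ((n:ℝ) - n')) * u) / 2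
      - Real.cos ((π * ((n:ℝ) + n')) * u) / 2) (fun u _ => hcongr u)]
  have hd : ((n:ℝ) - n') ≠ 0 := by
    intro hcon
    apply hne
    have : (n:ℝ) = n' := by linarith
    exact_mod_cast this
  have hs : ((n:ℝ) + n') ≠ 0 := by
    have : (0:ℝ) < n := by exact_mod_cast hn
    have : (0:ℝ) < n' := by exact_mod_cast hn'
    positivity
  have hc1 : (π * ((n:ℝ) - n')) ≠ 0 := mul_ne_zero Real.pi_ne_zero hd
  have hc2 : (π * ((n:ℝ) + n')) ≠ 0 := mul_ne_zero Real.pi_ne_zero hs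
  rw [intervalIntegral.integral_sub, intervalIntegral.integral_div, intervalIntegral.integral_div,
    aux_int_cos _ hc1, aux_int_cos _ hc2]
  · have e1 : Real.sin (π * ((n:ℝ) - n')) = 0 := by
      have : ((n:ℝ) - n') = ((n:ℤ) - (n':ℤ) : ℤ) := by push_cast; ring
      rw [this]; exact aux_sin_int_pi _
    have e2 : Real.sin (π * ((n:ℝ) + n')) = 0 := by
      have : ((n:ℝ) + n') = ((n:ℤ) + (n':ℤ) : ℤ) := by push_cast; ring
      rw [this]; exact aux_sin_int_pi _
    rw [e1, e2]; simp
  · exact ((Real.continuous_cos.comp (continuous_const.mul continuous_id)).div_const 2).intervalIntegrable _ _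
  · exact ((Real.continuous_cos.comp (continuous_const.mul continuous_id)).div_const 2).intervalIntegrable _ _

-- lower bound of sin^2 integral on middle interval
lemma aux_int_sin_sq_mid (m : ℕ) (hm : 1 ≤ m) :
    (1:ℝ)/8 ≤ ∫ u in (1/1000:ℝ)..(1 - 1/1000), Real.sin (π * m * u) ^ 2 := by
  rw [intervalIntegral.integral_comp_mul_left (fun x => Real.sin x ^ 2) (aux_pi_nat_ne m hm)]
  rw [integral_sin_sq]
  have hm1 : (1:ℝ) ≤ m := by exact_mod_cast hm
  have hpi := Real.pi_gt_three
  have hc : (0:ℝ) < π * m := by nlinarith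
  set A := π * (m:ℝ) * (1/1000) with hA
  set B := π * (m:ℝ) * (1 - 1/1000) with hB
  have h1 : -1 ≤ Real.sin A * Real.cos A := by
    nlinarith [Real.neg_one_le_sin A, Real.sin_le_one A, Real.neg_one_le_cos A, Real.cos_le_one A]
  have h2 : Real.sin B * Real.cos B ≤ 1 := by
    nlinarith [Real.neg_one_le_sin B, Real.sin_le_one B, Real.neg_one_le_cos B, Real.cos_le_one B]
  have hBA : B - A = π * m * (1 - 2/1000) := by rw [hA, hB]; ring
  have key : (π * m)⁻¹ * ((Real.sin A * Real.cos A - Real.sin B * Real.cos B + B - A) / 2)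
      ≥ 1/8 := by
    have hinv : (π*(m:ℝ))⁻¹ ≤ 1/3 := by
      rw [inv_le_comm₀ (by positivity) (by norm_num)]
      nlinarith
    have hlow : Real.sin A * Real.cos A - Real.sin B * Real.cos B + B - A
        ≥ π * m * (1 - 2/1000) - 2 := by nlinarith
    have hpos : (0:ℝ) < (π*(m:ℝ))⁻¹ := by positivity
    calc (π * m)⁻¹ * ((Real.sin A * Real.cos A - Real.sin B * Real.cos B + B - A) / 2)
        ≥ (π * m)⁻¹ * ((π * m * (1 - 2/1000) - 2) / 2) := by
          apply mul_le_mul_of_nonneg_left _ (le_of_lt hpos); linarith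
      _ = (1 - 2/1000)/2 - (π*m)⁻¹ := by field_simp
      _ ≥ (1 - 2/1000)/2 - 1/3 := by linarith
      _ ≥ 1/8 := by norm_num
  simpa [smul_eq_mul] using key

lemma aux_chi_sin_lower (χ : ℝ → ℝ) (hχc : Continuous χ)
    (hχ_one : ∀ x ∈ Set.Icc (1 / 1000 : ℝ) (1 - 1 / 1000), χ x = 1)
    (m : ℕ) (hm : 1 ≤ m) :
    (1:ℝ)/8 ≤ ∫ u in (0:ℝ)..1, (χ u * Real.sin (π * m * u)) ^ 2 := by
  have hcont : Continuous fun u : ℝ => (χ u * Real.sin (π * m * u)) ^ 2 := by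
    apply Continuous.pow
    exact hχc.mul (Real.continuous_sin.comp (continuous_const.mul continuous_id))
  have hint : ∀ p q : ℝ, IntervalIntegrable (fun u => (χ u * Real.sin (π * m * u)) ^ 2) volume p q :=
    fun p q => hcont.intervalIntegrable p q
  have split1 : ∫ u in (0:ℝ)..1, (χ u * Real.sin (π * m * u)) ^ 2
      = (∫ u in (0:ℝ)..(1/1000), (χ u * Real.sin (π * m * u)) ^ 2)
        + (∫ u in (1/1000:ℝ)..(1 - 1/1000), (χ u * Real.sin (π * m * u)) ^ 2)
        + (∫ u in (1 - 1/1000:ℝ)..1, (χ u * Real.sin (π * m * u)) ^ 2) := by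
    rw [integral_add_adjacent_intervals (hint _ _) (hint _ _),
      integral_add_adjacent_intervals (hint _ _) (hint _ _)]
  have h1 : (0:ℝ) ≤ ∫ u in (0:ℝ)..(1/1000), (χ u * Real.sin (π * m * u)) ^ 2 :=
    intervalIntegral.integral_nonneg (by norm_num) (fun x _ => sq_nonneg _)
  have h3 : (0:ℝ) ≤ ∫ u in (1 - 1/1000:ℝ)..1, (χ u * Real.sin (π * m * u)) ^ 2 :=
    intervalIntegral.integral_nonneg (by norm_num) (fun x _ => sq_nonneg _)
  have h2 : (∫ u in (1/1000:ℝ)..(1 - 1/1000), (χ u * Real.sin (π * m * u)) ^ 2)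
      = ∫ u in (1/1000:ℝ)..(1 - 1/1000), Real.sin (π * m * u) ^ 2 := by
    apply intervalIntegral.integral_congr
    intro x hx
    rw [Set.uIcc_of_le (by norm_num)] at hx
    simp only [hχ_one x hx, one_mul]
  have := aux_int_sin_sq_mid m hm
  rw [split1, h2]
  linarith

lemma aux_ibp (χ : ℝ → ℝ) (hχ_smooth : ContDiff ℝ (⊤ : ℕ∞) χ)
    (hχ0 : χ 0 = 0) (hχ1 : χ 1 = 0)
    (hχ_le : ∀ x, |χ x| ≤ 1)
    (M : ℝ) (hM : ∀ x ∈ Set.Icc (0:ℝ) 1, |deriv χ x| ≤ M)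
    (c : ℝ) (hc : c ≠ 0) :
    |∫ u in (0:ℝ)..1, (χ u) ^ 2 * Real.cos (c * u)| ≤ 2 * M / |c| := by
  have hχd : Differentiable ℝ χ := hχ_smooth.differentiable (by simp)
  have hχ'c : Continuous (deriv χ) := ((hχ_smooth.of_le (by simp)).iterate_deriv 1).continuous
  have hu : ∀ x ∈ Set.uIcc (0:ℝ) 1, HasDerivAt (fun t => (χ t) ^ 2) (2 * χ x * deriv χ x) x := by
    intro x _
    have : HasDerivAt (fun t => (χ t) ^ 2) _ x := ((hχd x).hasDerivAt).pow 2
    simpa [mul_comm, mul_assoc, mul_left_comm] using this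
  have hv : ∀ x ∈ Set.uIcc (0:ℝ) 1, HasDerivAt (fun t => Real.sin (c * t) / c) (Real.cos (c * x)) x := by
    intro x _
    have h1 : HasDerivAt (fun t : ℝ => c * t) c x := by
      simpa using (hasDerivAt_id x).const_mul c
    have h2 : HasDerivAt (fun t => Real.sin (c * t)) (Real.cos (c * x) * c) x :=
      (Real.hasDerivAt_sin (c * x)).comp x h1
    have := h2.div_const c
    simpa [mul_div_cancel_right₀ _ hc] using this
  have hu' : IntervalIntegrable (fun x => 2 * χ x * deriv χ x) volume 0 1 :=
    (((continuous_const.mul hχ_smooth.continuous).mul hχ'c)).intervalIntegrable _ _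
  have hv' : IntervalIntegrable (fun x => Real.cos (c * x)) volume 0 1 :=
    (Real.continuous_cos.comp (continuous_const.mul continuous_id)).intervalIntegrable _ _
  have hibp := intervalIntegral.integral_mul_deriv_eq_deriv_mul hu hv hu' hv'
  rw [hibp, hχ0, hχ1]
  simp only [ne_eq, OfNat.ofNat_ne_zero, not_false_eq_true, zero_pow, zero_mul, mul_zero, sub_zero,
    zero_sub, abs_neg]
  have hb : ∀ x ∈ Set.uIoc (0:ℝ) 1, ‖2 * χ x * deriv χ x * (Real.sin (c * x) / c)‖ ≤ 2 * M / |c| := by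
    intro x hx
    have hx' : x ∈ Set.Icc (0:ℝ) 1 := by
      rw [Set.uIoc_of_le (by norm_num)] at hx
      exact ⟨le_of_lt hx.1, hx.2⟩
    have hM0 : (0:ℝ) ≤ M := le_trans (abs_nonneg _) (hM x hx')
    have hcpos : (0:ℝ) < |c| := abs_pos.mpr hc
    rw [Real.norm_eq_abs, abs_mul, abs_mul, abs_div]
    have e1 : |2 * χ x| ≤ 2 := by
      rw [abs_mul, abs_two]
      nlinarith [hχ_le x, abs_nonneg (χ x)]
    have e2 : |Real.sin (c*x)| / |c| ≤ 1 / |c| := by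
      gcongr
      exact Real.abs_sin_le_one _
    calc |2 * χ x| * |deriv χ x| * (|Real.sin (c*x)| / |c|)
        ≤ 2 * M * (1/|c|) := by
          apply mul_le_mul (mul_le_mul e1 (hM x hx') (abs_nonneg _) (by norm_num)) e2
            (by positivity) (by positivity)
      _ = 2 * M / |c| := by ring
  calc ‖∫ x in (0:ℝ)..1, 2 * χ x * deriv χ x * (Real.sin (c * x) / c)‖
      ≤ (2 * M / |c|) * |1 - 0| := intervalIntegral.norm_integral_le_of_norm_le_const hb
    _ = 2 * M / |c| := by norm_num

lemma aux_chi_orth (χ : ℝ → ℝ) (hχ_smooth : ContDiff ℝ (⊤ : ℕ∞) χ)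
    (hχ0 : χ 0 = 0) (hχ1 : χ 1 = 0)
    (hχ_le : ∀ x, |χ x| ≤ 1)
    (M : ℝ) (hM : ∀ x ∈ Set.Icc (0:ℝ) 1, |deriv χ x| ≤ M)
    (m m' : ℕ) (hm : 1 ≤ m) (hm' : 1 ≤ m') (hne : m ≠ m') :
    |∫ u in (0:ℝ)..1, (χ u * Real.sin (π * m * u)) * (χ u * Real.sin (π * m' * u))|
      ≤ 4 * M / (π * |(m:ℝ) - m'|) := by
  have hM0 : (0:ℝ) ≤ M := le_trans (abs_nonneg _) (hM 0 (by norm_num))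
  set c₁ : ℝ := π * ((m:ℝ) - m') with hc₁def
  set c₂ : ℝ := π * ((m:ℝ) + m') with hc₂def
  have hd : ((m:ℝ) - m') ≠ 0 := by
    intro hcon; apply hne
    have : (m:ℝ) = m' := by linarith
    exact_mod_cast this
  have habs1 : (1:ℝ) ≤ |(m:ℝ) - m'| := by
    have : ((m:ℝ) - m') = ((m:ℤ) - (m':ℤ) : ℤ) := by push_cast; ring
    rw [this, ← Int.cast_abs]
    have : (1:ℤ) ≤ |(m:ℤ) - m'| := by
      apply Int.one_le_abs
      omega
    exact_mod_cast this
  have hc₁ : c₁ ≠ 0 := mul_ne_zero Real.pi_ne_zero hd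
  have hsum_pos : (0:ℝ) < (m:ℝ) + m' := by
    have h1 : (0:ℝ) < m := by exact_mod_cast hm
    have h2 : (0:ℝ) < m' := by exact_mod_cast hm'
    linarith
  have hc₂ : c₂ ≠ 0 := mul_ne_zero Real.pi_ne_zero (ne_of_gt hsum_pos)
  have hcongr : ∀ u : ℝ, (χ u * Real.sin (π * m * u)) * (χ u * Real.sin (π * m' * u))
      = (χ u)^2 * Real.cos (c₁ * u) / 2 - (χ u)^2 * Real.cos (c₂ * u) / 2 := by
    intro u
    have : Real.sin (π * m * u) * Real.sin (π * m' * u)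
        = (Real.cos (π * m * u - π * m' * u) - Real.cos (π * m * u + π * m' * u)) / 2 := by
      rw [Real.cos_sub, Real.cos_add]; ring
    have e1 : π * (m:ℝ) * u - π * m' * u = c₁ * u := by rw [hc₁def]; ring
    have e2 : π * (m:ℝ) * u + π * m' * u = c₂ * u := by rw [hc₂def]; ring
    rw [e1, e2] at this
    nlinarith [this]
  have hcont : ∀ c : ℝ, IntervalIntegrable (fun u => (χ u)^2 * Real.cos (c * u) / 2) volume 0 1 := by
    intro c
    exact (((hχ_smooth.continuous.pow 2).mul
      (Real.continuous_cos.comp (continuous_const.mul continuous_id))).div_const 2).intervalIntegrable _ _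
  rw [intervalIntegral.integral_congr (g := fun u => (χ u)^2 * Real.cos (c₁ * u) / 2
      - (χ u)^2 * Real.cos (c₂ * u) / 2) (fun u _ => hcongr u)]
  rw [intervalIntegral.integral_sub (hcont c₁) (hcont c₂)]
  have b1 := aux_ibp χ hχ_smooth hχ0 hχ1 hχ_le M hM c₁ hc₁
  have b2 := aux_ibp χ hχ_smooth hχ0 hχ1 hχ_le M hM c₂ hc₂
  have habs_c₁ : |c₁| = π * |(m:ℝ) - m'| := by
    rw [hc₁def, abs_mul, abs_of_pos Real.pi_pos]
  have habs_c₂ : |c₂| = π * ((m:ℝ) + m') := by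
    rw [hc₂def, abs_mul, abs_of_pos Real.pi_pos, abs_of_pos hsum_pos]
  have hle : |(m:ℝ) - m'| ≤ (m:ℝ) + m' := by
    rw [abs_sub_le_iff]
    constructor <;> nlinarith
  have hc₁pos : (0:ℝ) < π * |(m:ℝ) - m'| := by
    have := Real.pi_pos
    nlinarith
  have key2 : 2 * M / |c₂| ≤ 2 * M / |c₁| := by
    rw [habs_c₁, habs_c₂]
    gcongr
    all_goals (have := Real.pi_pos; try exact hc₁pos)
    all_goals nlinarith
  have hdiv : ∀ J : ℝ, |∫ u in (0:ℝ)..1, (χ u)^2 * Real.cos (J * u) / 2|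
      = |∫ u in (0:ℝ)..1, (χ u)^2 * Real.cos (J * u)| / 2 := by
    intro J
    rw [intervalIntegral.integral_div, abs_div, abs_two]
  calc |(∫ u in (0:ℝ)..1, (χ u)^2 * Real.cos (c₁ * u) / 2)
        - ∫ u in (0:ℝ)..1, (χ u)^2 * Real.cos (c₂ * u) / 2|
      ≤ |∫ u in (0:ℝ)..1, (χ u)^2 * Real.cos (c₁ * u) / 2|
        + |∫ u in (0:ℝ)..1, (χ u)^2 * Real.cos (c₂ * u) / 2| := abs_sub _ _
    _ ≤ (2*M/|c₁|)/2 + (2*M/|c₁|)/2 := by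
        rw [hdiv, hdiv]
        have t1 : |∫ u in (0:ℝ)..1, (χ u)^2 * Real.cos (c₁ * u)| / 2 ≤ (2*M/|c₁|)/2 := by linarith
        have t2 : |∫ u in (0:ℝ)..1, (χ u)^2 * Real.cos (c₂ * u)| / 2 ≤ (2*M/|c₁|)/2 := by linarith
        linarith
    _ = 2 * M / (π * |(m:ℝ) - m'|) := by
        rw [habs_c₁]; ring
    _ ≤ 4 * M / (π * |(m:ℝ) - m'|) := by
        gcongr
        linarith

lemma aux_hasDeriv_B (χ : ℝ → ℝ) (hχd : Differentiable ℝ χ) (c u : ℝ) :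
    HasDerivAt (fun v => χ v * Real.sin (c * v))
      (deriv χ u * Real.sin (c * u) + c * χ u * Real.cos (c * u)) u := by
  have h1 : HasDerivAt (fun t : ℝ => c * t) c u := by simpa using (hasDerivAt_id u).const_mul c
  have hs : HasDerivAt (fun v => Real.sin (c * v)) (Real.cos (c * u) * c) u :=
    (Real.hasDerivAt_sin (c * u)).comp u h1
  have : HasDerivAt (fun v => χ v * Real.sin (c * v)) _ u := ((hχd u).hasDerivAt).mul hs
  convert this using 1
  ring

lemma aux_hasDeriv_B' (χ : ℝ → ℝ) (hχd : Differentiable ℝ χ)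
    (hχd2 : Differentiable ℝ (deriv χ)) (c u : ℝ) :
    HasDerivAt (fun v => deriv χ v * Real.sin (c * v) + c * χ v * Real.cos (c * v))
      (deriv (deriv χ) u * Real.sin (c * u) + 2 * c * deriv χ u * Real.cos (c * u)
        - c ^ 2 * χ u * Real.sin (c * u)) u := by
  have h1 : HasDerivAt (fun t : ℝ => c * t) c u := by simpa using (hasDerivAt_id u).const_mul c
  have hs : HasDerivAt (fun v => Real.sin (c * v)) (Real.cos (c * u) * c) u :=
    (Real.hasDerivAt_sin (c * u)).comp u h1
  have hc : HasDerivAt (fun v => Real.cos (c * v)) (-Real.sin (c * u) * c) u :=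
    (Real.hasDerivAt_cos (c * u)).comp u h1
  have p1 := ((hχd2 u).hasDerivAt).mul hs
  have p2 := (((hχd u).hasDerivAt).mul hc).const_mul c
  have h : HasDerivAt (fun x => deriv χ x * Real.sin (c * x) + c * (χ x * Real.cos (c * x))) _ u :=
    p1.add p2
  have hfun : (fun v => deriv χ v * Real.sin (c * v) + c * χ v * Real.cos (c * v))
      = fun x => deriv χ x * Real.sin (c * x) + c * (χ x * Real.cos (c * x)) := by
    funext x; ring
  rw [hfun]
  convert h using 1
  ring

lemma aux_deriv_affine (f f' : ℝ → ℝ) (hf : ∀ u, HasDerivAt f (f' u) u) (aa L : ℝ) :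
    deriv (fun x => f ((x - aa)/L)) = fun t => f' ((t - aa)/L) / L := by
  funext t
  have hu : HasDerivAt (fun x : ℝ => (x - aa)/L) (1/L) t :=
    ((hasDerivAt_id t).sub_const aa).div_const L
  have h2 := ((hf ((t - aa)/L)).comp t hu).deriv
  have : (f ∘ fun x : ℝ => (x - aa)/L) = fun x => f ((x - aa)/L) := rfl
  rw [this] at h2
  rw [h2, mul_one_div]

lemma aux_deriv2_scaled (χ : ℝ → ℝ) (hχd : Differentiable ℝ χ)
    (hχd2 : Differentiable ℝ (deriv χ)) (c aa L : ℝ) (t : ℝ) :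
    deriv (deriv (fun x => χ ((x - aa)/L) * Real.sin (c * ((x - aa)/L)))) t
      = (deriv (deriv χ) ((t - aa)/L) * Real.sin (c * ((t - aa)/L))
         + 2 * c * deriv χ ((t - aa)/L) * Real.cos (c * ((t - aa)/L))
         - c ^ 2 * χ ((t - aa)/L) * Real.sin (c * ((t - aa)/L))) / L ^ 2 := by
  have step1 : deriv (fun x => χ ((x - aa)/L) * Real.sin (c * ((x - aa)/L)))
      = fun t => (deriv χ ((t - aa)/L) * Real.sin (c * ((t - aa)/L))
          + c * χ ((t - aa)/L) * Real.cos (c * ((t - aa)/L))) / L :=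
    aux_deriv_affine _ _ (aux_hasDeriv_B χ hχd c) aa L
  rw [step1]
  have step2 : deriv (fun x => (deriv χ ((x - aa)/L) * Real.sin (c * ((x - aa)/L))
      + c * χ ((x - aa)/L) * Real.cos (c * ((x - aa)/L)))/L) t
      = (deriv (deriv χ) ((t - aa)/L) * Real.sin (c * ((t - aa)/L))
        + 2 * c * deriv χ ((t - aa)/L) * Real.cos (c * ((t - aa)/L))
        - c ^ 2 * χ ((t - aa)/L) * Real.sin (c * ((t - aa)/L))) / L / L := by
    rw [deriv_div_const]
    rw [aux_deriv_affine _ _ (aux_hasDeriv_B' χ hχd hχd2 c) aa L]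
  rw [step2]
  ring

lemma aux_deriv2_sin (K e y : ℝ) :
    deriv (deriv (fun t => K * Real.sin (e * t))) y = -(e ^ 2) * (K * Real.sin (e * y)) := by
  have h1 : ∀ s : ℝ, HasDerivAt (fun t : ℝ => e * t) e s :=
    fun s => by simpa using (hasDerivAt_id s).const_mul e
  have step1 : deriv (fun t => K * Real.sin (e * t)) = fun s => K * (Real.cos (e * s) * e) := by
    funext s
    exact (((Real.hasDerivAt_sin (e * s)).comp s (h1 s)).const_mul K).deriv
  rw [step1]
  have : HasDerivAt (fun s => K * (Real.cos (e * s) * e))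
      (K * ((-Real.sin (e * y) * e) * e)) y :=
    (((Real.hasDerivAt_cos (e * y)).comp y (h1 y)).mul_const e).const_mul K
  rw [this.deriv]
  ring

lemma aux_deriv2_mul_const (G : ℝ → ℝ) (hG : Differentiable ℝ G)
    (hG' : Differentiable ℝ (deriv G)) (K : ℝ) (t : ℝ) :
    deriv (deriv (fun x => G x * K)) t = deriv (deriv G) t * K := by
  have step1 : deriv (fun x => G x * K) = fun x => deriv G x * K := by
    funext x; exact deriv_mul_const (hG x) K
  rw [step1, deriv_mul_const (hG' t)]

lemma aux_scale (f : ℝ → ℝ) (aa L : ℝ) (hL : L ≠ 0) :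
    ∫ x in aa..(aa + L), f ((x - aa)/L) = L * ∫ u in (0:ℝ)..1, f u := by
  rw [intervalIntegral.integral_comp_sub_right (fun x => f (x/L)) aa]
  simp only [sub_self, add_sub_cancel_left]
  rw [intervalIntegral.integral_comp_div f hL, zero_div, div_self hL]
  simp [smul_eq_mul]

lemma aux_setIntegral_Icc (f : ℝ → ℝ) (p q : ℝ) (hpq : p ≤ q) :
    ∫ x in Set.Icc p q, f x = ∫ x in p..q, f x := by
  rw [MeasureTheory.integral_Icc_eq_integral_Ioc, intervalIntegral.integral_of_le hpq]

lemma aux_integral_eq_interval (f : ℝ → ℝ) (p q : ℝ) (hpq : p ≤ q)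
    (hf : ∀ x, x ∉ Set.Icc p q → f x = 0) :
    ∫ x, f x = ∫ x in p..q, f x := by
  rw [← aux_setIntegral_Icc f p q hpq, ← MeasureTheory.integral_indicator measurableSet_Icc]
  congr 1
  funext x
  by_cases hx : x ∈ Set.Icc p q
  · simp [Set.indicator_of_mem hx]
  · simp [Set.indicator_of_notMem hx, hf x hx]

lemma aux_line_scale (W : ℝ → ℝ) (A L : ℝ) (hL : 0 < L)
    (hW : ∀ u, u ∉ Set.Icc (0:ℝ) 1 → W u = 0) :
    ∫ x : ℝ, W ((x - A)/L) = L * ∫ u in (0:ℝ)..1, W u := by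
  have hvan : ∀ x, x ∉ Set.Icc A (A + L) → W ((x - A)/L) = 0 := by
    intro x hx
    apply hW
    intro hu
    apply hx
    have hx1 : x - A = ((x - A)/L) * L := (div_mul_cancel₀ _ hL.ne').symm
    constructor
    · nlinarith [hu.1, hu.2]
    · nlinarith [hu.1, hu.2]
  rw [aux_integral_eq_interval _ A (A+L) (by linarith) hvan]
  exact aux_scale W A L hL.ne'

lemma aux_y_scale (V : ℝ → ℝ) (Δ : ℝ) (hΔ : 0 < Δ) :
    ∫ y : ℝ, (if 0 ≤ y ∧ y ≤ Δ then V (y/Δ) else 0) = Δ * ∫ u in (0:ℝ)..1, V u := by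
  have h1 : (fun y => if 0 ≤ y ∧ y ≤ Δ then V (y/Δ) else 0)
      = Set.indicator (Set.Icc 0 Δ) (fun y => V (y/Δ)) := by
    funext y
    by_cases hy : 0 ≤ y ∧ y ≤ Δ
    · rw [if_pos hy, Set.indicator_of_mem (Set.mem_Icc.mpr hy)]
    · rw [if_neg hy, Set.indicator_of_notMem (fun hc => hy (Set.mem_Icc.mp hc))]
  rw [h1, MeasureTheory.integral_indicator measurableSet_Icc,
    aux_setIntegral_Icc _ _ _ hΔ.le, intervalIntegral.integral_comp_div V hΔ.ne',
    zero_div, div_self hΔ.ne']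
  simp [smul_eq_mul]

lemma aux_fubini (F G : ℝ → ℝ) :
    ∫ z : ℝ × ℝ, F z.1 * G z.2 = (∫ x, F x) * ∫ y, G y := by
  rw [Measure.volume_eq_prod]
  exact MeasureTheory.integral_prod_mul F G

lemma aux_fubini_set (F G : ℝ → ℝ) (s t : Set ℝ) :
    ∫ z : ℝ × ℝ in s ×ˢ t, F z.1 * G z.2 = (∫ x in s, F x) * ∫ y in t, G y := by
  rw [Measure.volume_eq_prod, ← Measure.prod_restrict]
  exact MeasureTheory.integral_prod_mul F G

lemma aux_scale0 (f : ℝ → ℝ) (Δ : ℝ) (hΔ : Δ ≠ 0) :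
    ∫ x in (0:ℝ)..Δ, f (x/Δ) = Δ * ∫ u in (0:ℝ)..1, f u := by
  rw [intervalIntegral.integral_comp_div f hΔ, zero_div, div_self hΔ]
  simp [smul_eq_mul]


/-- The Laplacian `Δf = ∂²f/∂x² + ∂²f/∂y²` of a function on `ℝ²`, expressed via
iterated one-variable derivatives. -/
noncomputable def lap (f : ℝ × ℝ → ℝ) (z : ℝ × ℝ) : ℝ :=
  deriv (deriv fun t => f (t, z.2)) z.1 + deriv (deriv fun t => f (z.1, t)) z.2

set_option maxHeartbeats 2000000 in
theorem stmt_0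
    -- the profile functions h and τ
    (h τ : ℝ → ℝ)
    (hh_mono : MonotoneOn h (Set.Ici 0))
    (hh_pos : ∀ x > (0 : ℝ), 0 < h x) (hh_le : ∀ x > (0 : ℝ), h x ≤ Real.sqrt x)
    (hτ_pos : ∀ x ≥ (0 : ℝ), 0 < τ x) (hτ_anti : AntitoneOn τ (Set.Ici 0))
    -- the sequence of quasi-eigenvalues μ_i, i ≥ 1
    (μseq : ℕ → ℝ)
    (hμ_pos : ∀ i ≥ 1, 0 < μseq i) (hμ_mono : ∀ i ≥ 1, μseq i ≤ μseq (i + 1))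
    (hμ_tend : Tendsto μseq atTop atTop)
    (hτμ_sum : Summable fun i : ℕ => τ (μseq (i + 1)))
    -- the mollified indicator χ, with ε = 1/1000
    (χ : ℝ → ℝ) (hχ_smooth : ContDiff ℝ (⊤ : ℕ∞) χ)
    (hχ_nonneg : ∀ x, 0 ≤ χ x) (hχ_le : ∀ x, χ x ≤ 1)
    (hχ_zero : ∀ x, x ∉ Set.Icc (0 : ℝ) 1 → χ x = 0)
    (hχ_one : ∀ x ∈ Set.Icc (1 / 1000 : ℝ) (1 - 1 / 1000), χ x = 1)
    -- the derived data δ_i, ℓ_i, ξ_i, a_i, the rectangles R_i and the domain D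
    (δ ℓ ξ a : ℕ → ℝ)
    (hδ : ∀ i ≥ 1, δ i = π / Real.sqrt (μseq i))
    (hℓ : ∀ i ≥ 1, ℓ i = τ (μseq i) * Real.sqrt (μseq i) / (π * h (μseq i)))
    (hξ : ∀ i ≥ 1, ξ i = π ^ 2 / (ℓ i) ^ 2)
    (ha1 : a 1 = 1) (ha : ∀ i ≥ 1, a (i + 1) = a i + ℓ i)
    (R : ℕ → Set (ℝ × ℝ))
    (hR : ∀ i, R i = Set.Icc (a i) (a (i + 1)) ×ˢ Set.Icc (0 : ℝ) (δ i))
    (D : Set (ℝ × ℝ))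
    (hD : D = (Set.Ioo 0 (a 1) ×ˢ Set.Ioo 0 (δ 1)) ∪
      ⋃ (i : ℕ) (_ : 1 ≤ i), Set.Ioo (a i) (a (i + 1)) ×ˢ Set.Ioo 0 (δ i))
    -- the quasimodes ψ̂_{i,m,n}, ψ_{i,m,n} and quasi-eigenvalues μ_{i,m,n}
    (ψhat ψ : ℕ → ℕ → ℕ → ℝ × ℝ → ℝ)
    (hψhat : ∀ i m n x y, ψhat i m n (x, y) =
      χ ((x - a i) / ℓ i) * Real.sin (π * m * (x - a i) / ℓ i) * Real.sin (π * n * y / δ i))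
    (hψ : ∀ i m n x y, ψ i m n (x, y) =
      if 0 ≤ y ∧ y ≤ δ i then ψhat i m n (x, y) else 0)
    (μq : ℕ → ℕ → ℕ → ℝ)
    (hμq : ∀ i m n, μq i m n = (n : ℝ) ^ 2 * μseq i + (m : ℝ) ^ 2 * ξ i) :
    -- (0)
    (∀ i ≥ 1, ξ i = π ^ 4 * h (μseq i) ^ 2 / (μseq i * τ (μseq i) ^ 2))
    ∧ (Summable fun i : ℕ => ℓ (i + 1) * δ (i + 1))
    ∧ (Summable fun i : ℕ => ℓ (i + 1) * δ (i + 1) * h (μseq (i + 1)))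
    ∧ (∑' i : ℕ, ℓ (i + 1) * δ (i + 1) * h (μseq (i + 1)) = ∑' i : ℕ, τ (μseq (i + 1)))
    ∧ ∃ C > (0 : ℝ),
      -- (i)
      (∀ i m n : ℕ, 1 ≤ i → 1 ≤ m → 1 ≤ n →
        Real.sqrt (∫ z in R i, (lap (ψhat i m n) z + μq i m n * ψhat i m n z) ^ 2)
          ≤ C * m * ξ i * Real.sqrt (∫ z in R i, (ψhat i m n z) ^ 2))
      -- (ii)
      ∧ (∀ i i' m m' n n' : ℕ, 1 ≤ i → 1 ≤ i' → 1 ≤ m → 1 ≤ m' → 1 ≤ n → 1 ≤ n' →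
          (i ≠ i' ∨ n ≠ n') →
          ∫ z, ψ i m n z * ψ i' m' n' z = 0)
      -- (iii)
      ∧ (∀ i m m' n : ℕ, 1 ≤ i → 1 ≤ m → 1 ≤ m' → 1 ≤ n → m ≠ m' →
          |∫ z, ψ i m n z * ψ i m' n z|
            ≤ C * min (1 / 1000) (1 / |(m : ℝ) - (m' : ℝ)|)
              * Real.sqrt (∫ z, (ψ i m n z) ^ 2) * Real.sqrt (∫ z, (ψ i m' n z) ^ 2))
      -- (iv)
      ∧ (∀ i m n : ℕ, 1 ≤ i → 1 ≤ m → 1 ≤ n → ∀ z ∉ R i, ψ i m n z = 0)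
      ∧ (∀ K : Set (ℝ × ℝ), IsCompact K → K ⊆ D →
          ∃ i₀ : ℕ, ∀ i ≥ i₀, ∀ m n : ℕ, 1 ≤ m → 1 ≤ n →
            ∫ z in D \ K, (ψ i m n z) ^ 2 = ∫ z, (ψ i m n z) ^ 2) := by
  -- basic positivity and continuity facts
  have hπ := Real.pi_pos
  have hπ3 := Real.pi_gt_three
  have hχc : Continuous χ := hχ_smooth.continuous
  have hχd : Differentiable ℝ χ := hχ_smooth.differentiable (by simp)
  have hχd2 : Differentiable ℝ (deriv χ) :=
    ((hχ_smooth.of_le (by simp)).iterate_deriv 1).differentiable (by simp)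
  have hχ'c : Continuous (deriv χ) := ((hχ_smooth.of_le (by simp)).iterate_deriv 1).continuous
  have hit2 : deriv^[2] χ = deriv (deriv χ) := by
    simp [Function.iterate_succ, Function.iterate_zero, Function.comp_def]
  have hχ''c : Continuous (deriv (deriv χ)) := by
    rw [← hit2]; exact ((hχ_smooth.of_le (by simp)).iterate_deriv 2).continuous
  have hχ0 : χ 0 = 0 := by
    have h1 : Tendsto χ (nhdsWithin 0 (Set.Iio 0)) (nhds (χ 0)) :=
      (hχc.tendsto 0).mono_left nhdsWithin_le_nhds
    have h2 : Tendsto χ (nhdsWithin 0 (Set.Iio 0)) (nhds 0) := by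
      apply Tendsto.congr' _ tendsto_const_nhds
      filter_upwards [self_mem_nhdsWithin] with x hx
      exact (hχ_zero x (fun hmem => absurd hmem.1 (not_le.mpr hx))).symm
    exact tendsto_nhds_unique h1 h2
  have hχ1 : χ 1 = 0 := by
    have h1 : Tendsto χ (nhdsWithin 1 (Set.Ioi 1)) (nhds (χ 1)) :=
      (hχc.tendsto 1).mono_left nhdsWithin_le_nhds
    have h2 : Tendsto χ (nhdsWithin 1 (Set.Ioi 1)) (nhds 0) := by
      apply Tendsto.congr' _ tendsto_const_nhds
      filter_upwards [self_mem_nhdsWithin] with x hx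
      exact (hχ_zero x (fun hmem => absurd hmem.2 (not_le.mpr hx))).symm
    exact tendsto_nhds_unique h1 h2
  have habs : ∀ x, |χ x| ≤ 1 := fun x => abs_le.mpr ⟨by linarith [hχ_nonneg x], hχ_le x⟩
  have hτpos : ∀ i, 1 ≤ i → 0 < τ (μseq i) := fun i hi => hτ_pos _ (hμ_pos i hi).le
  have hhpos : ∀ i, 1 ≤ i → 0 < h (μseq i) := fun i hi => hh_pos _ (hμ_pos i hi)
  have hsqpos : ∀ i, 1 ≤ i → 0 < Real.sqrt (μseq i) := fun i hi => Real.sqrt_pos.mpr (hμ_pos i hi)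
  have hLpos : ∀ i, 1 ≤ i → 0 < ℓ i := fun i hi => by
    rw [hℓ i hi]; exact div_pos (mul_pos (hτpos i hi) (hsqpos i hi)) (mul_pos hπ (hhpos i hi))
  have hδpos : ∀ i, 1 ≤ i → 0 < δ i := fun i hi => by
    rw [hδ i hi]; exact div_pos hπ (hsqpos i hi)
  have hξpos : ∀ i, 1 ≤ i → 0 < ξ i := fun i hi => by
    rw [hξ i hi]; exact div_pos (by positivity) (pow_pos (hLpos i hi) 2)
  have ha_mono : ∀ i j, 1 ≤ i → i ≤ j → a i ≤ a j := by
    intro i j hi hij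
    induction j, hij using Nat.le_induction with
    | base => exact le_refl _
    | succ k hk ih =>
        rw [ha k (le_trans hi hk)]
        nlinarith [hLpos k (le_trans hi hk)]
  have hμ1le : ∀ i, 1 ≤ i → μseq 1 ≤ μseq i := by
    intro i hi
    induction i, hi using Nat.le_induction with
    | base => exact le_refl _
    | succ k hk ih => exact le_trans ih (hμ_mono k hk)
  -- part (0a)
  have part0a : ∀ i ≥ 1, ξ i = π ^ 4 * h (μseq i) ^ 2 / (μseq i * τ (μseq i) ^ 2) := by
    intro i hi
    have hsq : Real.sqrt (μseq i) ^ 2 = μseq i := Real.sq_sqrt (hμ_pos i hi).le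
    have h1 := (hτpos i hi).ne'
    have h2 := (hhpos i hi).ne'
    have h3 := (hμ_pos i hi).ne'
    have h4 := (hsqpos i hi).ne'
    rw [hξ i hi, hℓ i hi]
    rw [div_pow, mul_pow, mul_pow, hsq, div_div_eq_mul_div]
    rw [div_eq_div_iff (by positivity) (by positivity)]
    ring
  -- the key identity ℓ δ h = τ
  have hkey : ∀ i, 1 ≤ i → ℓ i * δ i * h (μseq i) = τ (μseq i) := by
    intro i hi
    have h1 := (hτpos i hi).ne'
    have h2 := (hhpos i hi).ne'
    have h4 := (hsqpos i hi).ne'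
    rw [hℓ i hi, hδ i hi]
    field_simp
  have hkey2 : ∀ i : ℕ, ℓ (i+1) * δ (i+1) = τ (μseq (i+1)) / h (μseq (i+1)) := by
    intro i
    have hk := hkey (i+1) (Nat.le_add_left 1 i)
    rw [eq_div_iff (hhpos (i+1) (Nat.le_add_left 1 i)).ne']
    exact hk
  have part0b : Summable fun i : ℕ => ℓ (i + 1) * δ (i + 1) := by
    rw [summable_congr hkey2]
    apply Summable.of_nonneg_of_le
      (fun i => div_nonneg (hτpos _ (Nat.le_add_left 1 i)).le (hhpos _ (Nat.le_add_left 1 i)).le)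
      (fun i => ?_) (hτμ_sum.mul_right (h (μseq 1))⁻¹)
    rw [div_eq_mul_inv]
    apply mul_le_mul_of_nonneg_left _ (hτpos _ (Nat.le_add_left 1 i)).le
    apply inv_anti₀ (hhpos 1 le_rfl)
    exact hh_mono (Set.mem_Ici.mpr (hμ_pos 1 le_rfl).le)
      (Set.mem_Ici.mpr (hμ_pos _ (Nat.le_add_left 1 i)).le) (hμ1le _ (Nat.le_add_left 1 i))
  have part0c : Summable fun i : ℕ => ℓ (i + 1) * δ (i + 1) * h (μseq (i + 1)) :=
    hτμ_sum.congr (fun i => (hkey (i+1) (Nat.le_add_left 1 i)).symm)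
  have part0d : ∑' i : ℕ, ℓ (i + 1) * δ (i + 1) * h (μseq (i + 1)) = ∑' i : ℕ, τ (μseq (i + 1)) :=
    tsum_congr (fun i => hkey (i+1) (Nat.le_add_left 1 i))
  refine ⟨part0a, part0b, part0c, part0d, ?_⟩
  -- bounds on the derivatives of χ on [0,1]
  obtain ⟨M₁, hM₁⟩ := isCompact_Icc.exists_bound_of_continuousOn
    (s := Set.Icc (0:ℝ) 1) hχ'c.continuousOn
  obtain ⟨M₂, hM₂⟩ := isCompact_Icc.exists_bound_of_continuousOn
    (s := Set.Icc (0:ℝ) 1) hχ''c.continuousOn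
  set M1 : ℝ := max M₁ 0 with hM1def
  set M2 : ℝ := max M₂ 0 with hM2def
  have hM1 : ∀ x ∈ Set.Icc (0:ℝ) 1, |deriv χ x| ≤ M1 :=
    fun x hx => le_trans (hM₁ x hx) (le_max_left _ _)
  have hM2 : ∀ x ∈ Set.Icc (0:ℝ) 1, |deriv (deriv χ) x| ≤ M2 :=
    fun x hx => le_trans (hM₂ x hx) (le_max_left _ _)
  have hM10 : (0:ℝ) ≤ M1 := le_max_right _ _
  have hM20 : (0:ℝ) ≤ M2 := le_max_right _ _
  set C : ℝ := 16000 * (M1 + M2 + 1) with hCdef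
  have hC : (0:ℝ) < C := by rw [hCdef]; nlinarith
  -- strict support of ψ
  have hsupp : ∀ i m n : ℕ, 1 ≤ i → ∀ x y : ℝ, ψ i m n (x, y) ≠ 0 →
      a i < x ∧ x < a i + ℓ i ∧ 0 < y ∧ y < δ i := by
    intro i m n hi x y hne
    have hL := hLpos i hi
    have hΔ := hδpos i hi
    rw [hψ i m n x y] at hne
    by_cases hc : 0 ≤ y ∧ y ≤ δ i
    swap
    · rw [if_neg hc] at hne; exact absurd rfl hne
    rw [if_pos hc, hψhat i m n x y] at hne
    have hχne : χ ((x - a i)/ℓ i) ≠ 0 := fun hz => hne (by rw [hz]; ring)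
    have hs1 : Real.sin (π * m * (x - a i) / ℓ i) ≠ 0 := fun hz => hne (by rw [hz]; ring)
    have hs2 : Real.sin (π * n * y / δ i) ≠ 0 := fun hz => hne (by rw [hz]; ring)
    have hu : (x - a i)/ℓ i ∈ Set.Icc (0:ℝ) 1 := by
      by_contra hcon; exact hχne (hχ_zero _ hcon)
    have hxa : x - a i = ((x - a i)/ℓ i) * ℓ i := (div_mul_cancel₀ _ hL.ne').symm
    have hx1 : a i ≤ x := by nlinarith [hu.1, hu.2]
    have hx2 : x ≤ a i + ℓ i := by nlinarith [hu.1, hu.2]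
    have hx1' : a i ≠ x := by
      intro he
      exact hs1 (by rw [← he, sub_self, mul_zero, zero_div, Real.sin_zero])
    have hx2' : x ≠ a i + ℓ i := by
      intro he
      apply hs1
      have : x - a i = ℓ i := by rw [he]; ring
      rw [this, mul_div_assoc, div_self hL.ne', mul_one, mul_comm]
      exact Real.sin_nat_mul_pi m
    have hy1' : 0 ≠ y := by
      intro he
      exact hs2 (by rw [← he, mul_zero, zero_div, Real.sin_zero])
    have hy2' : y ≠ δ i := by
      intro he
      apply hs2
      rw [he, mul_div_assoc, div_self hΔ.ne', mul_one, mul_comm]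
      exact Real.sin_nat_mul_pi n
    exact ⟨lt_of_le_of_ne hx1 hx1', lt_of_le_of_ne hx2 hx2', lt_of_le_of_ne hc.1 hy1',
      lt_of_le_of_ne hc.2 hy2'⟩
  -- product form of ψ
  have hψXY : ∀ i m n : ℕ, ∀ z : ℝ × ℝ, ψ i m n z =
      (χ ((z.1 - a i)/ℓ i) * Real.sin (π * m * (z.1 - a i) / ℓ i)) *
      (if 0 ≤ z.2 ∧ z.2 ≤ δ i then Real.sin (π * n * z.2 / δ i) else 0) := by
    intro i m n z
    obtain ⟨x, y⟩ := z
    rw [hψ i m n x y]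
    split_ifs with hc
    · rw [hψhat i m n x y]
    · rw [mul_zero]
  -- Fubini splitting of the quasimode products
  have hsplit : ∀ i m m' n n' : ℕ, 1 ≤ i → ∫ z, ψ i m n z * ψ i m' n' z
      = (ℓ i * ∫ u in (0:ℝ)..1, (χ u * Real.sin (π * m * u)) * (χ u * Real.sin (π * m' * u)))
        * (δ i * ∫ u in (0:ℝ)..1, Real.sin (π * n * u) * Real.sin (π * n' * u)) := by
    intro i m m' n n' hi
    have hL := hLpos i hi
    have hΔ := hδpos i hi
    have hfun : (fun z : ℝ × ℝ => ψ i m n z * ψ i m' n' z)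
        = fun z => ((fun x => (χ ((x - a i)/ℓ i) * Real.sin (π * m * (x - a i) / ℓ i))
              * (χ ((x - a i)/ℓ i) * Real.sin (π * m' * (x - a i) / ℓ i))) z.1)
            * ((fun y => if 0 ≤ y ∧ y ≤ δ i
                then Real.sin (π * n * y / δ i) * Real.sin (π * n' * y / δ i) else 0) z.2) := by
      funext z
      rw [hψXY i m n z, hψXY i m' n' z]
      by_cases hc : 0 ≤ z.2 ∧ z.2 ≤ δ i
      · simp only [if_pos hc]; ring
      · simp only [if_neg hc]; ring
    rw [hfun]
    rw [aux_fubini (fun x => (χ ((x - a i)/ℓ i) * Real.sin (π * m * (x - a i) / ℓ i))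
              * (χ ((x - a i)/ℓ i) * Real.sin (π * m' * (x - a i) / ℓ i)))
      (fun y => if 0 ≤ y ∧ y ≤ δ i
        then Real.sin (π * n * y / δ i) * Real.sin (π * n' * y / δ i) else 0)]
    congr 1
    · have hx : (fun x => (χ ((x - a i)/ℓ i) * Real.sin (π * m * (x - a i) / ℓ i))
              * (χ ((x - a i)/ℓ i) * Real.sin (π * m' * (x - a i) / ℓ i)))
          = fun x => (fun u => (χ u * Real.sin (π * m * u)) * (χ u * Real.sin (π * m' * u)))
              ((x - a i)/ℓ i) := by
        funext x
        simp only [mul_div_assoc]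
      rw [hx]
      exact aux_line_scale (fun u => (χ u * Real.sin (π * m * u)) * (χ u * Real.sin (π * m' * u)))
        (a i) (ℓ i) hL (fun u hu => by simp only [hχ_zero u hu, zero_mul, mul_zero])
    · have hy : (fun y => if 0 ≤ y ∧ y ≤ δ i
            then Real.sin (π * n * y / δ i) * Real.sin (π * n' * y / δ i) else 0)
          = fun y => if 0 ≤ y ∧ y ≤ δ i
              then (fun u => Real.sin (π * n * u) * Real.sin (π * n' * u)) (y/δ i) else 0 := by
        funext y
        by_cases hc : 0 ≤ y ∧ y ≤ δ i
        · simp only [if_pos hc, mul_div_assoc]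
        · simp only [if_neg hc]
      rw [hy]
      exact aux_y_scale (fun u => Real.sin (π * n * u) * Real.sin (π * n' * u)) (δ i) hΔ
  -- value of ∫ ψ²
  have hψsq : ∀ i m n : ℕ, 1 ≤ i → 1 ≤ n → ∫ z, (ψ i m n z) ^ 2
      = (∫ u in (0:ℝ)..1, (χ u * Real.sin (π * m * u)) ^ 2) * (ℓ i * (δ i * (1/2))) := by
    intro i m n hi hn
    have e1 : (fun z : ℝ × ℝ => (ψ i m n z) ^ 2) = fun z => ψ i m n z * ψ i m n z := by
      funext z; rw [pow_two]
    calc ∫ z, (ψ i m n z) ^ 2 = ∫ z, ψ i m n z * ψ i m n z := by rw [e1]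
      _ = (ℓ i * ∫ u in (0:ℝ)..1, (χ u * Real.sin (π * m * u)) * (χ u * Real.sin (π * m * u)))
          * (δ i * ∫ u in (0:ℝ)..1, Real.sin (π * n * u) * Real.sin (π * n * u)) :=
        hsplit i m m n n hi
      _ = (∫ u in (0:ℝ)..1, (χ u * Real.sin (π * m * u)) ^ 2) * (ℓ i * (δ i * (1/2))) := by
        rw [intervalIntegral.integral_congr
            (g := fun u => (χ u * Real.sin (π * m * u)) ^ 2) (fun u _ => (pow_two _).symm),
          intervalIntegral.integral_congr
            (g := fun u => Real.sin (π * n * u) ^ 2) (fun u _ => (pow_two _).symm),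
          aux_int_sin_sq n hn]
        ring
  refine ⟨C, hC, ?_, ?_, ?_, ?_, ?_⟩
  · -- (i) quasimode estimate
    intro i m n hi hm hn
    have hL := hLpos i hi
    have hΔ := hδpos i hi
    have hμi := hμ_pos i hi
    have hsq := hsqpos i hi
    have hm1 : (1:ℝ) ≤ m := by exact_mod_cast hm
    have hn0 : (0:ℝ) < n := by exact_mod_cast hn
    have hμΔ : (π * n / δ i)^2 = (n:ℝ)^2 * μseq i := by
      have e1 : π * (n:ℝ) / δ i = n * Real.sqrt (μseq i) := by
        rw [hδ i hi]
        field_simp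
      rw [e1, mul_pow, Real.sq_sqrt hμi.le]
    have hξL : (m:ℝ)^2 * ξ i = (π * m)^2 / (ℓ i)^2 := by
      rw [hξ i hi]
      field_simp
    set G : ℝ → ℝ := fun x => (deriv (deriv χ) ((x - a i)/ℓ i)
        * Real.sin (π * m * ((x - a i)/ℓ i))
        + 2*(π * m)*deriv χ ((x - a i)/ℓ i) * Real.cos (π * m * ((x - a i)/ℓ i))) / (ℓ i)^2
      with hGdef
    have haff : ∀ t : ℝ, HasDerivAt (fun s : ℝ => (s - a i)/ℓ i) (1/ℓ i) t :=
      fun t => ((hasDerivAt_id t).sub_const (a i)).div_const (ℓ i)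
    have hlap : ∀ z : ℝ × ℝ, lap (ψhat i m n) z + μq i m n * ψhat i m n z
        = G z.1 * Real.sin (π * n * z.2 / δ i) := by
      intro z
      obtain ⟨x, y⟩ := z
      have hxfun : (fun t => ψhat i m n (t, y))
          = fun t => (χ ((t - a i)/ℓ i) * Real.sin (π * m * ((t - a i)/ℓ i)))
              * Real.sin (π * n * y / δ i) := by
        funext t
        rw [hψhat i m n t y, mul_div_assoc]
      have hGdiff : Differentiable ℝ
          (fun t => χ ((t - a i)/ℓ i) * Real.sin (π * m * ((t - a i)/ℓ i))) :=
        fun t => ((HasDerivAt.comp (h₂ := fun v => χ v * Real.sin (π * m * v)) t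
          (aux_hasDeriv_B χ hχd (π * m) ((t - a i)/ℓ i)) (haff t))).differentiableAt
      have hGder : deriv (fun t => χ ((t - a i)/ℓ i) * Real.sin (π * m * ((t - a i)/ℓ i)))
          = fun t => (deriv χ ((t - a i)/ℓ i) * Real.sin (π * m * ((t - a i)/ℓ i))
            + (π * m) * χ ((t - a i)/ℓ i) * Real.cos (π * m * ((t - a i)/ℓ i))) / ℓ i :=
        aux_deriv_affine _ _ (aux_hasDeriv_B χ hχd (π * m)) (a i) (ℓ i)
      have hGdiff2 : Differentiable ℝ
          (deriv (fun t => χ ((t - a i)/ℓ i) * Real.sin (π * m * ((t - a i)/ℓ i)))) := by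
        rw [hGder]
        intro t
        exact (((aux_hasDeriv_B' χ hχd hχd2 (π * m) ((t - a i)/ℓ i)).comp t
          (haff t)).div_const (ℓ i)).differentiableAt
      have hxd : deriv (deriv (fun t => ψhat i m n (t, y))) x
          = ((deriv (deriv χ) ((x - a i)/ℓ i) * Real.sin (π * m * ((x - a i)/ℓ i))
             + 2*(π * m)*deriv χ ((x - a i)/ℓ i) * Real.cos (π * m * ((x - a i)/ℓ i))
             - (π * m)^2 * χ ((x - a i)/ℓ i) * Real.sin (π * m * ((x - a i)/ℓ i))) / (ℓ i)^2)
            * Real.sin (π * n * y / δ i) := by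
        rw [hxfun, aux_deriv2_mul_const _ hGdiff hGdiff2 _ x,
          aux_deriv2_scaled χ hχd hχd2 (π * m) (a i) (ℓ i) x]
      have hyfun : (fun t => ψhat i m n (x, t))
          = fun t => (χ ((x - a i)/ℓ i) * Real.sin (π * m * ((x - a i)/ℓ i)))
              * Real.sin ((π * n / δ i) * t) := by
        funext t
        rw [hψhat i m n x t, mul_div_assoc]
        congr 1
        rw [mul_div_right_comm]
      have hyd : deriv (deriv (fun t => ψhat i m n (x, t))) y
          = -((π * n / δ i)^2) * ((χ ((x - a i)/ℓ i) * Real.sin (π * m * ((x - a i)/ℓ i)))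
              * Real.sin ((π * n / δ i) * y)) := by
        rw [hyfun, aux_deriv2_sin]
      have hsin_e : Real.sin ((π * n / δ i) * y) = Real.sin (π * n * y / δ i) := by
        congr 1
        ring
      show deriv (deriv fun t => ψhat i m n (t, y)) x
          + deriv (deriv fun t => ψhat i m n (x, t)) y
          + μq i m n * ψhat i m n (x, y) = _
      rw [hxd, hyd, hsin_e, hμq i m n, hψhat i m n x y, mul_div_assoc, hμΔ, hGdef]
      have hμrw : (n:ℝ)^2 * μseq i = (π * n / δ i)^2 := hμΔ.symm
      rw [hμrw, hξL]
      field_simp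
      ring
    -- Fubini for the two set integrals
    have hyval : ∫ y in Set.Icc (0:ℝ) (δ i), Real.sin (π * n * y / δ i)^2 = δ i * (1/2) := by
      rw [aux_setIntegral_Icc _ _ _ hΔ.le,
        intervalIntegral.integral_congr
          (g := fun y => (fun u => Real.sin (π * n * u)^2) (y/δ i))
          (fun y _ => by simp only [mul_div_assoc]),
        aux_scale0 (fun u => Real.sin (π * n * u)^2) (δ i) hΔ.ne', aux_int_sin_sq n hn]
    have hRint : ∫ z in R i, (lap (ψhat i m n) z + μq i m n * ψhat i m n z)^2
        = (∫ x in Set.Icc (a i) (a (i+1)), (G x)^2) * (δ i * (1/2)) := by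
      rw [hR i]
      have hfun2 : (fun z : ℝ × ℝ => (lap (ψhat i m n) z + μq i m n * ψhat i m n z)^2)
          = fun z => ((fun x => (G x)^2) z.1) * ((fun y => Real.sin (π * n * y / δ i)^2) z.2) := by
        funext z
        rw [hlap z]
        exact mul_pow _ _ 2
      rw [hfun2, aux_fubini_set (fun x => (G x)^2) (fun y => Real.sin (π * n * y / δ i)^2) _ _,
        hyval]
    have hRψ : ∫ z in R i, (ψhat i m n z)^2
        = (ℓ i * ∫ u in (0:ℝ)..1, (χ u * Real.sin (π * m * u))^2) * (δ i * (1/2)) := by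
      rw [hR i]
      have hfun3 : (fun z : ℝ × ℝ => (ψhat i m n z)^2)
          = fun z => ((fun x => (χ ((x - a i)/ℓ i) * Real.sin (π * m * ((x - a i)/ℓ i)))^2) z.1)
              * ((fun y => Real.sin (π * n * y / δ i)^2) z.2) := by
        funext z
        obtain ⟨x, y⟩ := z
        rw [hψhat i m n x y, mul_div_assoc]
        exact mul_pow _ _ 2
      rw [hfun3, aux_fubini_set
          (fun x => (χ ((x - a i)/ℓ i) * Real.sin (π * m * ((x - a i)/ℓ i)))^2)
          (fun y => Real.sin (π * n * y / δ i)^2) _ _, hyval]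
      congr 1
      rw [aux_setIntegral_Icc _ _ _ (by rw [ha i hi]; linarith), ha i hi]
      exact aux_scale (fun u => (χ u * Real.sin (π * m * u))^2) (a i) (ℓ i) hL.ne'
    -- upper bound on the x-integral of G²
    have hact : Continuous (fun x : ℝ => (x - a i)/ℓ i) :=
      (continuous_id.sub continuous_const).div_const _
    have hGcont : Continuous G := by
      rw [hGdef]
      exact (((hχ''c.comp hact).mul
          (Real.continuous_sin.comp (continuous_const.mul hact))).add
        ((continuous_const.mul (hχ'c.comp hact)).mul
          (Real.continuous_cos.comp (continuous_const.mul hact)))).div_const _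
    have hπm : (0:ℝ) ≤ π * m := by positivity
    have hxupper : ∫ x in Set.Icc (a i) (a (i+1)), (G x)^2
        ≤ ℓ i * ((M2 + 2*(π * m)*M1) / (ℓ i)^2)^2 := by
      rw [aux_setIntegral_Icc _ _ _ (by rw [ha i hi]; linarith), ha i hi]
      have hb : ∀ x ∈ Set.Icc (a i) (a i + ℓ i),
          (G x)^2 ≤ ((M2 + 2*(π * m)*M1) / (ℓ i)^2)^2 := by
        intro x hx
        have hu : (x - a i)/ℓ i ∈ Set.Icc (0:ℝ) 1 := by
          constructor
          · exact div_nonneg (by linarith [hx.1]) hL.le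
          · rw [div_le_one hL]; linarith [hx.2]
        have h1 := hM1 _ hu
        have h2 := hM2 _ hu
        have hGb : |G x| ≤ (M2 + 2*(π * m)*M1) / (ℓ i)^2 := by
          rw [hGdef]
          simp only
          rw [abs_div, abs_of_pos (pow_pos hL 2)]
          gcongr
          calc |deriv (deriv χ) ((x - a i)/ℓ i) * Real.sin (π * m * ((x - a i)/ℓ i))
                + 2*(π * m)*deriv χ ((x - a i)/ℓ i) * Real.cos (π * m * ((x - a i)/ℓ i))|
              ≤ |deriv (deriv χ) ((x - a i)/ℓ i) * Real.sin (π * m * ((x - a i)/ℓ i))|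
                + |2*(π * m)*deriv χ ((x - a i)/ℓ i) * Real.cos (π * m * ((x - a i)/ℓ i))| :=
              abs_add_le _ _
            _ ≤ M2 + 2*(π * m)*M1 := by
              have e1 : |deriv (deriv χ) ((x - a i)/ℓ i) * Real.sin (π * m * ((x - a i)/ℓ i))|
                  ≤ M2 := by
                rw [abs_mul]
                calc |deriv (deriv χ) ((x - a i)/ℓ i)| * |Real.sin (π * m * ((x - a i)/ℓ i))|
                    ≤ M2 * 1 := mul_le_mul h2 (Real.abs_sin_le_one _) (abs_nonneg _) hM20
                  _ = M2 := mul_one _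
              have e2 : |2*(π * m)*deriv χ ((x - a i)/ℓ i) * Real.cos (π * m * ((x - a i)/ℓ i))|
                  ≤ 2*(π * m)*M1 := by
                rw [abs_mul, abs_mul, abs_of_nonneg (by positivity : (0:ℝ) ≤ 2*(π * m))]
                calc 2*(π * m) * |deriv χ ((x - a i)/ℓ i)| * |Real.cos (π * m * ((x - a i)/ℓ i))|
                    ≤ 2*(π * m) * M1 * 1 := by
                      apply mul_le_mul _ (Real.abs_cos_le_one _) (abs_nonneg _) (by positivity)
                      exact mul_le_mul_of_nonneg_left h1 (by positivity)
                  _ = 2*(π * m)*M1 := mul_one _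
              linarith
        calc (G x)^2 = |G x|^2 := (sq_abs _).symm
          _ ≤ ((M2 + 2*(π * m)*M1) / (ℓ i)^2)^2 :=
            pow_le_pow_left₀ (abs_nonneg _) hGb 2
      calc ∫ x in (a i)..(a i + ℓ i), (G x)^2
          ≤ ∫ _x in (a i)..(a i + ℓ i), ((M2 + 2*(π * m)*M1) / (ℓ i)^2)^2 := by
            apply intervalIntegral.integral_mono_on (by linarith)
              ((hGcont.pow 2).intervalIntegrable _ _) (intervalIntegrable_const) hb
        _ = ℓ i * ((M2 + 2*(π * m)*M1) / (ℓ i)^2)^2 := by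
            rw [intervalIntegral.integral_const, smul_eq_mul, add_sub_cancel_left]
    have hJ := aux_chi_sin_lower χ hχc hχ_one m hm
    -- numeric inequality
    have hnum : 8*(M2 + 2*(π * m)*M1)^2 ≤ C^2*(m:ℝ)^2*π^4 := by
      have hπ4 : π < 3.15 := Real.pi_lt_d2
      have hS : M2 + 2*(π * m)*M1 ≤ (m:ℝ) * (M2 + 7*M1) := by
        have t1 : (0:ℝ) ≤ ((m:ℝ) - 1) * M2 := mul_nonneg (by linarith) hM20
        have t2 : (0:ℝ) ≤ ((m:ℝ) * M1) * (7 - 2*π) := by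
          apply mul_nonneg (mul_nonneg (by linarith) hM10)
          linarith
        nlinarith [t1, t2]
      have hCS : M2 + 7*M1 ≤ C := by rw [hCdef]; nlinarith
      have hSnn : (0:ℝ) ≤ M2 + 2*(π * m)*M1 := by nlinarith
      have hsq1 : (M2 + 2*(π * m)*M1)^2 ≤ ((m:ℝ) * (M2 + 7*M1))^2 :=
        pow_le_pow_left₀ hSnn hS 2
      have hsq2 : ((m:ℝ) * (M2 + 7*M1))^2 ≤ (m:ℝ)^2 * C^2 := by
        rw [mul_pow]
        apply mul_le_mul_of_nonneg_left (pow_le_pow_left₀ (by nlinarith) hCS 2) (by positivity)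
      have hXC : (M2 + 2*(π * m)*M1)^2 ≤ (m:ℝ)^2*C^2 := le_trans hsq1 hsq2
      have hπsq : (9:ℝ) ≤ π^2 := by nlinarith
      have h81 : (81:ℝ) ≤ π^4 := by nlinarith
      have hfin : 81*((m:ℝ)^2*C^2) ≤ π^4*((m:ℝ)^2*C^2) :=
        mul_le_mul_of_nonneg_right h81 (by positivity)
      nlinarith [hXC, hfin]
    -- key inequality between the set integrals
    have hK2 : ((M2 + 2*(π * m)*M1)/(ℓ i)^2)^2 * 8 ≤ (C*(m:ℝ)*ξ i)^2 := by
      rw [hξ i hi, div_pow]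
      have e2 : (C*(m:ℝ)*(π^2/(ℓ i)^2))^2 = (C^2*(m:ℝ)^2*π^4) / ((ℓ i)^2)^2 := by
        field_simp
      rw [e2, div_mul_eq_mul_div, div_le_div_iff₀ (by positivity) (by positivity)]
      nlinarith [hnum, sq_nonneg ((ℓ i)^2)]
    have hCmξ : (0:ℝ) ≤ C*(m:ℝ)*ξ i := by
      have := hξpos i hi
      positivity
    have hkey : ∫ z in R i, (lap (ψhat i m n) z + μq i m n * ψhat i m n z)^2
        ≤ (C*(m:ℝ)*ξ i)^2 * ∫ z in R i, (ψhat i m n z)^2 := by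
      rw [hRint, hRψ]
      calc (∫ x in Set.Icc (a i) (a (i+1)), (G x)^2) * (δ i * (1/2))
          ≤ (ℓ i * ((M2 + 2*(π * m)*M1) / (ℓ i)^2)^2) * (δ i * (1/2)) :=
            mul_le_mul_of_nonneg_right hxupper (by positivity)
        _ = (((M2 + 2*(π * m)*M1) / (ℓ i)^2)^2 * 8) * ((ℓ i*(1/8))*(δ i*(1/2))) := by ring
        _ ≤ ((C*(m:ℝ)*ξ i)^2) * ((ℓ i*(1/8))*(δ i*(1/2))) :=
            mul_le_mul_of_nonneg_right hK2 (by positivity)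
        _ ≤ ((C*(m:ℝ)*ξ i)^2) * ((ℓ i * ∫ u in (0:ℝ)..1, (χ u * Real.sin (π * m * u))^2)
              * (δ i*(1/2))) := by
            apply mul_le_mul_of_nonneg_left _ (sq_nonneg _)
            apply mul_le_mul_of_nonneg_right _ (by positivity)
            apply mul_le_mul_of_nonneg_left _ hL.le
            linarith
    have hfinal := Real.sqrt_le_sqrt hkey
    rw [Real.sqrt_mul (sq_nonneg _), Real.sqrt_sq hCmξ] at hfinal
    exact hfinal
  · -- (ii) orthogonality
    intro i i' m m' n n' hi hi' hm hm' hn hn' hor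
    by_cases hii : i = i'
    · subst hii
      have hnn' : n ≠ n' := by
        rcases hor with hcon | hgood
        · exact absurd rfl hcon
        · exact hgood
      rw [hsplit i m m' n n' hi, aux_int_sin_orth n n' hn hn' hnn']
      ring
    · have key : ∀ j j' mm mm' nn nn' : ℕ, 1 ≤ j → 1 ≤ j' → j < j' →
          ∀ z : ℝ × ℝ, ψ j mm nn z * ψ j' mm' nn' z = 0 := by
        intro j j' mm mm' nn nn' hj hj' hjj z
        obtain ⟨x, y⟩ := z
        by_cases h1 : ψ j mm nn (x, y) = 0
        · rw [h1, zero_mul]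
        by_cases h2 : ψ j' mm' nn' (x, y) = 0
        · rw [h2, mul_zero]
        exfalso
        have s1 := hsupp j mm nn hj x y h1
        have s2 := hsupp j' mm' nn' hj' x y h2
        have e1 : a (j+1) = a j + ℓ j := ha j hj
        have e2 : a (j+1) ≤ a j' := ha_mono (j+1) j' (Nat.le_add_left 1 j) hjj
        linarith [s1.2.1, s2.1]
      rcases lt_or_gt_of_ne hii with hlt | hgt
      · calc ∫ z, ψ i m n z * ψ i' m' n' z = ∫ _z : ℝ × ℝ, (0:ℝ) := by
              congr 1; funext z; exact key i i' m m' n n' hi hi' hlt z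
          _ = 0 := integral_zero _ _
      · calc ∫ z, ψ i m n z * ψ i' m' n' z = ∫ _z : ℝ × ℝ, (0:ℝ) := by
              congr 1; funext z; rw [mul_comm]; exact key i' i m' m n' n hi' hi hgt z
          _ = 0 := integral_zero _ _
  · -- (iii) quasi-orthogonality in m
    intro i m m' n hi hm hm' hn hne
    have hL := hLpos i hi
    have hΔ := hδpos i hi
    set K : ℝ := |(m:ℝ) - m'| with hKdef
    have hK1 : (1:ℝ) ≤ K := by
      rw [hKdef]
      have hcast : ((m:ℝ) - m') = ((m:ℤ) - (m':ℤ) : ℤ) := by push_cast; ring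
      rw [hcast, ← Int.cast_abs]
      have hz : (m:ℤ) - m' ≠ 0 := by
        have : (m:ℤ) ≠ m' := by exact_mod_cast hne
        omega
      exact_mod_cast Int.one_le_abs hz
    have hK0 : (0:ℝ) < K := lt_of_lt_of_le one_pos hK1
    have hval : ∫ z, ψ i m n z * ψ i m' n z
        = (∫ u in (0:ℝ)..1, (χ u * Real.sin (π * m * u)) * (χ u * Real.sin (π * m' * u)))
          * (ℓ i * (δ i * (1/2))) := by
      rw [hsplit i m m' n n hi,
        intervalIntegral.integral_congr
          (g := fun u => Real.sin (π * n * u) ^ 2) (fun u _ => (pow_two _).symm),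
        aux_int_sin_sq n hn]
      ring
    set P := ∫ u in (0:ℝ)..1, (χ u * Real.sin (π * m * u)) * (χ u * Real.sin (π * m' * u))
      with hPdef
    set T : ℝ := ℓ i * (δ i * (1/2)) with hTdef
    have hT : 0 < T := by
      rw [hTdef]; exact mul_pos hL (mul_pos hΔ (by norm_num))
    have hP : |P| ≤ 4 * M1 / (π * K) :=
      aux_chi_orth χ hχ_smooth hχ0 hχ1 habs M1 hM1 m m' hm hm' hne
    have habs_val : |∫ z, ψ i m n z * ψ i m' n z| = |P| * T := by
      rw [hval, abs_mul, abs_of_pos hT]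
    have hlow : ∀ mm : ℕ, 1 ≤ mm → (1/3) * Real.sqrt T ≤ Real.sqrt (∫ z, (ψ i mm n z)^2) := by
      intro mm hmm
      rw [hψsq i mm n hi hn]
      have hJ := aux_chi_sin_lower χ hχc hχ_one mm hmm
      have h19 : (1/9 : ℝ) * T ≤ (∫ u in (0:ℝ)..1, (χ u * Real.sin (π * mm * u))^2) * T := by
        apply mul_le_mul_of_nonneg_right _ hT.le
        linarith
      calc (1/3) * Real.sqrt T = Real.sqrt ((1/9) * T) := by
            rw [Real.sqrt_mul (by norm_num) T, show Real.sqrt (1/9 : ℝ) = 1/3 from by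
              rw [show (1/9:ℝ) = (1/3)^2 by norm_num, Real.sqrt_sq (by norm_num)]]
        _ ≤ Real.sqrt ((∫ u in (0:ℝ)..1, (χ u * Real.sin (π * mm * u))^2) * T) :=
            Real.sqrt_le_sqrt h19
      -- note: hψsq gives T in the form ℓ i * (δ i * (1/2))
    have hss : (1/9) * T ≤ Real.sqrt (∫ z, (ψ i m n z)^2) * Real.sqrt (∫ z, (ψ i m' n z)^2) := by
      have h1 := hlow m hm
      have h2 := hlow m' hm'
      have hsT : Real.sqrt T * Real.sqrt T = T := Real.mul_self_sqrt hT.le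
      nlinarith [Real.sqrt_nonneg T, Real.sqrt_nonneg (∫ z, (ψ i m n z)^2),
        Real.sqrt_nonneg (∫ z, (ψ i m' n z)^2)]
    have hmin : 1/(1000*K) ≤ min (1/1000 : ℝ) (1/K) := by
      apply le_min
      · rw [div_le_div_iff₀ (by positivity) (by norm_num)]
        nlinarith
      · rw [div_le_div_iff₀ (by positivity) hK0]
        nlinarith
    have hmin0 : (0:ℝ) ≤ min (1/1000 : ℝ) (1/K) := le_trans (by positivity) hmin
    have hPK : |P| * K ≤ 4 * M1 / π := by
      have hmul := mul_le_mul_of_nonneg_right hP hK0.le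
      calc |P| * K ≤ (4 * M1 / (π * K)) * K := hmul
        _ = 4 * M1 / π := by field_simp
    have hcoef : 4 * M1 / π ≤ C / 9000 := by
      rw [div_le_div_iff₀ hπ (by norm_num), hCdef]
      nlinarith
    have hPmin : |P| ≤ (C/9) * min (1/1000 : ℝ) (1/K) := by
      have h2 : (C/9) * (1/(1000*K)) * K ≤ ((C/9) * min (1/1000 : ℝ) (1/K)) * K := by
        apply mul_le_mul_of_nonneg_right _ hK0.le
        apply mul_le_mul_of_nonneg_left hmin (by positivity)
      have h3 : (C/9) * (1/(1000*K)) * K = C / 9000 := by field_simp; ring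
      have h1 : |P| * K ≤ ((C/9) * min (1/1000 : ℝ) (1/K)) * K := by
        nlinarith
      exact le_of_mul_le_mul_right h1 hK0
    rw [habs_val]
    calc |P| * T ≤ ((C/9) * min (1/1000 : ℝ) (1/K)) * T :=
          mul_le_mul_of_nonneg_right hPmin hT.le
      _ = (C * min (1/1000 : ℝ) (1/K)) * ((1/9) * T) := by ring
      _ ≤ (C * min (1/1000 : ℝ) (1/K))
          * (Real.sqrt (∫ z, (ψ i m n z)^2) * Real.sqrt (∫ z, (ψ i m' n z)^2)) :=
          mul_le_mul_of_nonneg_left hss (mul_nonneg hC.le hmin0)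
      _ = C * min (1/1000 : ℝ) (1/K)
          * Real.sqrt (∫ z, (ψ i m n z)^2) * Real.sqrt (∫ z, (ψ i m' n z)^2) := by ring
  · -- (iv)(a) support
    intro i m n hi hm hn z hz
    obtain ⟨x, y⟩ := z
    by_contra hne
    apply hz
    rw [hR i]
    have hs := hsupp i m n hi x y hne
    have e1 : a (i+1) = a i + ℓ i := ha i hi
    refine Set.mem_prod.mpr ⟨Set.mem_Icc.mpr ⟨hs.1.le, ?_⟩,
      Set.mem_Icc.mpr ⟨hs.2.2.1.le, hs.2.2.2.le⟩⟩
    rw [e1]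
    exact hs.2.1.le
  · -- (iv)(b) compact exhaustion
    intro K hK hKD
    classical
    set U : ℕ → Set (ℝ × ℝ) := fun j => if j = 0 then (Set.Ioo 0 (a 1) ×ˢ Set.Ioo 0 (δ 1))
      else Set.Ioo (a j) (a (j+1)) ×ˢ Set.Ioo 0 (δ j) with hUdef
    have hU0 : U 0 = Set.Ioo 0 (a 1) ×ˢ Set.Ioo 0 (δ 1) := if_pos rfl
    have hUj : ∀ j : ℕ, j ≠ 0 → U j = Set.Ioo (a j) (a (j+1)) ×ˢ Set.Ioo 0 (δ j) :=
      fun j hj => if_neg hj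
    have hUopen : ∀ j, IsOpen (U j) := by
      intro j
      by_cases hj : j = 0
      · rw [hj, hU0]; exact isOpen_Ioo.prod isOpen_Ioo
      · rw [hUj j hj]; exact isOpen_Ioo.prod isOpen_Ioo
    have hcover : K ⊆ ⋃ j, U j := by
      intro z hz
      have hzD := hKD hz
      rw [hD] at hzD
      rcases hzD with h0 | hrest
      · exact Set.mem_iUnion.mpr ⟨0, by rw [hU0]; exact h0⟩
      · obtain ⟨j, hjmem⟩ := Set.mem_iUnion.mp hrest
        obtain ⟨hj1, hjz⟩ := Set.mem_iUnion.mp hjmem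
        exact Set.mem_iUnion.mpr ⟨j, by rw [hUj j (by omega)]; exact hjz⟩
    obtain ⟨t, ht⟩ := hK.elim_finite_subcover U hUopen hcover
    refine ⟨(t.sup id) + 1, ?_⟩
    intro i hi m n hm hn
    have hi1 : 1 ≤ i := le_trans (Nat.le_add_left 1 _) hi
    have hQK : ∀ z ∈ K, z ∉ Set.Ioo (a i) (a (i+1)) ×ˢ Set.Ioo 0 (δ i) := by
      intro z hzK hzQ
      have hzU := ht hzK
      obtain ⟨j, hjmem⟩ := Set.mem_iUnion.mp hzU
      obtain ⟨hjt, hzUj⟩ := Set.mem_iUnion.mp hjmem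
      have hji : j < i := by
        have hsup : j ≤ t.sup id := Finset.le_sup (f := id) hjt
        omega
      have hzx : a i < z.1 := hzQ.1.1
      by_cases hj0 : j = 0
      · rw [hj0, hU0] at hzUj
        have hx1 : z.1 < a 1 := hzUj.1.2
        have hle : a 1 ≤ a i := ha_mono 1 i le_rfl hi1
        linarith
      · rw [hUj j hj0] at hzUj
        have hx1 : z.1 < a (j+1) := hzUj.1.2
        have hle : a (j+1) ≤ a i := ha_mono (j+1) i (Nat.le_add_left 1 j) (by omega)
        linarith
    apply MeasureTheory.setIntegral_eq_integral_of_ae_compl_eq_zero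
    apply Filter.Eventually.of_forall
    intro z hz
    obtain ⟨x, y⟩ := z
    by_contra hne
    have hne' : ψ i m n (x, y) ≠ 0 := fun hc => hne (by rw [hc]; norm_num)
    have hs := hsupp i m n hi1 x y hne'
    have hzQ : (x, y) ∈ Set.Ioo (a i) (a (i+1)) ×ˢ Set.Ioo 0 (δ i) := by
      refine Set.mem_prod.mpr ⟨Set.mem_Ioo.mpr ⟨hs.1, ?_⟩, Set.mem_Ioo.mpr ⟨hs.2.2.1, hs.2.2.2⟩⟩
      rw [ha i hi1]
      exact hs.2.1
    apply hz
    constructor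
    · rw [hD]
      right
      exact Set.mem_iUnion.mpr ⟨i, Set.mem_iUnion.mpr ⟨hi1, hzQ⟩⟩
    · intro hzK
      exact hQK _ hzK hzQ
end

section
/- Let (δ_i)_{i≥1}, (ℓ_i)_{i≥1} and N(λ), L(λ), S be as in the context. Then there exists a constant C > 0, depending only on S, such that for all λ ≥ 1: | N(λ) − (λ/(4π))·Σ_{i : δ_i√λ > π} ℓ_i·δ_i | ≤ C·(1 + L(λ))·√λ. -/
/-!
For each `i`, rescaling by `√λ / π` turns the triples `(i, m, n)` into the positive lattice points
`(n, m)` of the quarter ellipse with semi-axes `Aᵢ = δᵢ√λ/π` and `Bᵢ = ℓᵢ√λ/π`; there are none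
unless `Aᵢ > 1`, i.e. `δᵢ√λ > π`. Counting such points column by column and comparing the column
heights with the integral of the decreasing function `x ↦ b√(1 - (x/a)²)` gives
`|#points - πab/4| ≤ a + b`. Summing over `i`, the main terms give `λ/(4π) Σ ℓᵢδᵢ` and the errors
are bounded by `(Σ δᵢ + Σ ℓᵢ)√λ/π ≤ (S + L(λ)/2)√λ`.
-/

open Real

/-- The number of triples of positive integers `(i, m, n)` with
`π²n²/δᵢ² + π²m²/ℓᵢ² < λ`. -/
noncomputable def spectralCount (δ ℓ : ℕ+ → ℝ) (lam : ℝ) : ℕ :=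
  Nat.card {p : ℕ+ × ℕ+ × ℕ+ //
    π ^ 2 * ((p.2.2 : ℕ) : ℝ) ^ 2 / (δ p.1) ^ 2
      + π ^ 2 * ((p.2.1 : ℕ) : ℝ) ^ 2 / (ℓ p.1) ^ 2 < lam}

/-- The effective length `L(λ) = 2 Σ_{i : δᵢ√λ > π} ℓᵢ`. -/
noncomputable def effLength (δ ℓ : ℕ+ → ℝ) (lam : ℝ) : ℝ :=
  2 * ∑ᶠ i ∈ {i : ℕ+ | δ i * Real.sqrt lam > π}, ℓ i

noncomputable def PNat.ltEquivFin (c : ℝ) : {m : ℕ+ // ((m : ℕ) : ℝ) < c} ≃ Fin (⌈c⌉₊ - 1) where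
  toFun m := ⟨(m.1 : ℕ) - 1, by have := Nat.lt_ceil.2 m.2; have := m.1.pos; omega⟩
  invFun j := ⟨⟨(j : ℕ) + 1, Nat.succ_pos _⟩, Nat.lt_ceil.1 (show (j : ℕ) + 1 < ⌈c⌉₊ by omega)⟩
  left_inv m := Subtype.ext <| PNat.coe_injective <| Nat.sub_add_cancel m.1.pos
  right_inv j := Fin.ext <| Nat.add_sub_cancel _ _

instance (c : ℝ) : Finite {m : ℕ+ // ((m : ℕ) : ℝ) < c} :=
  Finite.of_equiv _ (PNat.ltEquivFin c).symm

theorem PNat.card_coe_lt (c : ℝ) : Nat.card {m : ℕ+ // ((m : ℕ) : ℝ) < c} = ⌈c⌉₊ - 1 :=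
  Nat.card_eq_of_equiv_fin (PNat.ltEquivFin c)

theorem Nat.cast_ceil_sub_one_le {c : ℝ} (hc : 0 ≤ c) : ((⌈c⌉₊ - 1 : ℕ) : ℝ) ≤ c := by
  rcases Nat.eq_zero_or_pos ⌈c⌉₊ with h | h
  · simpa [h] using hc
  · rw [Nat.cast_pred h]
    linarith [Nat.ceil_lt_add_one hc]

theorem Nat.sub_one_le_cast_ceil_sub_one (c : ℝ) : c - 1 ≤ ((⌈c⌉₊ - 1 : ℕ) : ℝ) := by
  rcases Nat.eq_zero_or_pos ⌈c⌉₊ with h | h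
  · linarith [Nat.ceil_eq_zero.1 h]
  · rw [Nat.cast_pred h]
    linarith [Nat.le_ceil c]

noncomputable def latticeUnderGraphEquivSigma (a : ℝ) (f : ℝ → ℝ) :
    {p : ℕ+ × ℕ+ // ((p.1 : ℕ) : ℝ) < a ∧ ((p.2 : ℕ) : ℝ) < f (p.1 : ℕ)} ≃
      Σ n : {n : ℕ+ // ((n : ℕ) : ℝ) < a}, {m : ℕ+ // ((m : ℕ) : ℝ) < f (n.1 : ℕ)} where
  toFun p := ⟨⟨p.1.1, p.2.1⟩, ⟨p.1.2, p.2.2⟩⟩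
  invFun q := ⟨(q.1.1, q.2.1), q.1.2, q.2.2⟩
  left_inv _ := rfl
  right_inv _ := rfl

theorem finite_lattice_under_graph (a : ℝ) (f : ℝ → ℝ) :
    Finite {p : ℕ+ × ℕ+ // ((p.1 : ℕ) : ℝ) < a ∧ ((p.2 : ℕ) : ℝ) < f (p.1 : ℕ)} :=
  Finite.of_equiv _ (latticeUnderGraphEquivSigma a f).symm

theorem card_lattice_under_graph (a : ℝ) (f : ℝ → ℝ) :
    Nat.card {p : ℕ+ × ℕ+ // ((p.1 : ℕ) : ℝ) < a ∧ ((p.2 : ℕ) : ℝ) < f (p.1 : ℕ)} =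
      ∑ j ∈ Finset.range (⌈a⌉₊ - 1), (⌈f ((j + 1 : ℕ) : ℝ)⌉₊ - 1) := by
  have : Fintype {n : ℕ+ // ((n : ℕ) : ℝ) < a} := Fintype.ofFinite _
  rw [Nat.card_congr (latticeUnderGraphEquivSigma a f), Nat.card_sigma,
    ← (PNat.ltEquivFin a).symm.sum_comp, ← Fin.sum_univ_eq_sum_range]
  simp only [PNat.card_coe_lt]
  rfl

section AntitoneIntegralComparison

variable {f : ℝ → ℝ} {a : ℝ}

theorem integral_zero_mono_right (hf : AntitoneOn f (Set.Ici 0))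
    (hf0 : ∀ x, 0 ≤ x → 0 ≤ f x) {b c : ℝ} (hb : 0 ≤ b) (hbc : b ≤ c) :
    ∫ x in 0..b, f x ≤ ∫ x in 0..c, f x :=
  intervalIntegral.integral_mono_interval le_rfl hb hbc
    (MeasureTheory.ae_restrict_of_forall_mem measurableSet_Ioc fun x hx => hf0 x hx.1.le)
    (hf.mono <| by
      rw [Set.uIcc_of_le (hb.trans hbc)]; exact Set.Icc_subset_Ici_self).intervalIntegrable

theorem sum_range_ceil_le_integral (ha : 0 ≤ a) (hf : AntitoneOn f (Set.Ici 0))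
    (hf0 : ∀ x, 0 ≤ x → 0 ≤ f x) :
    ∑ j ∈ Finset.range (⌈a⌉₊ - 1), f ((j + 1 : ℕ) : ℝ) ≤ ∫ x in 0..a, f x := by
  calc ∑ j ∈ Finset.range (⌈a⌉₊ - 1), f ((j + 1 : ℕ) : ℝ)
      ≤ ∫ x in 0..((⌈a⌉₊ - 1 : ℕ) : ℝ), f x := by
        simpa using (hf.mono Set.Icc_subset_Ici_self).sum_le_integral (x₀ := 0)
    _ ≤ ∫ x in 0..a, f x :=
        integral_zero_mono_right hf hf0 (Nat.cast_nonneg _) (Nat.cast_ceil_sub_one_le ha)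

theorem integral_le_add_sum_range_ceil (ha : 0 ≤ a) (hf : AntitoneOn f (Set.Ici 0))
    (hf0 : ∀ x, 0 ≤ x → 0 ≤ f x) :
    ∫ x in 0..a, f x ≤ f 0 + ∑ j ∈ Finset.range (⌈a⌉₊ - 1), f ((j + 1 : ℕ) : ℝ) := by
  have hK : a ≤ ((⌈a⌉₊ - 1 + 1 : ℕ) : ℝ) :=
    (Nat.le_ceil a).trans (Nat.cast_le.2 (by omega))
  calc ∫ x in 0..a, f x
      ≤ ∫ x in 0..((⌈a⌉₊ - 1 + 1 : ℕ) : ℝ), f x := integral_zero_mono_right hf hf0 ha hK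
    _ ≤ ∑ i ∈ Finset.range (⌈a⌉₊ - 1 + 1), f (i : ℝ) := by
        simpa only [zero_add] using
          (hf.mono Set.Icc_subset_Ici_self).integral_le_sum (x₀ := 0) (a := ⌈a⌉₊ - 1 + 1)
    _ = f 0 + ∑ j ∈ Finset.range (⌈a⌉₊ - 1), f ((j + 1 : ℕ) : ℝ) := by
        rw [Finset.sum_range_succ', add_comm, Nat.cast_zero]

theorem abs_card_lattice_under_graph_sub_integral_le (ha : 0 ≤ a)
    (hf : AntitoneOn f (Set.Ici 0)) (hf0 : ∀ x, 0 ≤ x → 0 ≤ f x) :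
    |(Nat.card {p : ℕ+ × ℕ+ // ((p.1 : ℕ) : ℝ) < a ∧ ((p.2 : ℕ) : ℝ) < f (p.1 : ℕ)} : ℝ)
      - ∫ x in 0..a, f x| ≤ a + f 0 := by
  set K := ⌈a⌉₊ - 1
  have hcount_le : ((∑ j ∈ Finset.range K, (⌈f ((j + 1 : ℕ) : ℝ)⌉₊ - 1) : ℕ) : ℝ)
      ≤ ∑ j ∈ Finset.range K, f ((j + 1 : ℕ) : ℝ) := by
    rw [Nat.cast_sum]
    exact Finset.sum_le_sum fun j _ => Nat.cast_ceil_sub_one_le (hf0 _ (Nat.cast_nonneg _))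
  have hle_count : ∑ j ∈ Finset.range K, f ((j + 1 : ℕ) : ℝ) - K
      ≤ ((∑ j ∈ Finset.range K, (⌈f ((j + 1 : ℕ) : ℝ)⌉₊ - 1) : ℕ) : ℝ) := by
    rw [Nat.cast_sum]
    calc ∑ j ∈ Finset.range K, f ((j + 1 : ℕ) : ℝ) - K
        = ∑ j ∈ Finset.range K, (f ((j + 1 : ℕ) : ℝ) - 1) := by simp
      _ ≤ _ := Finset.sum_le_sum fun j _ => Nat.sub_one_le_cast_ceil_sub_one _
  rw [card_lattice_under_graph, abs_sub_le_iff]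
  constructor <;> linarith [sum_range_ceil_le_integral ha hf hf0,
    integral_le_add_sum_range_ceil ha hf hf0, Nat.cast_ceil_sub_one_le ha, hf0 0 le_rfl]

end AntitoneIntegralComparison

theorem integral_zero_one_sqrt_one_sub_sq : ∫ x in (0 : ℝ)..1, √(1 - x ^ 2) = π / 4 := by
  have hcont : Continuous fun x : ℝ => √(1 - x ^ 2) := by fun_prop
  have hsymm : ∫ x in (-1 : ℝ)..0, √(1 - x ^ 2) = ∫ x in (0 : ℝ)..1, √(1 - x ^ 2) := by
    have := intervalIntegral.integral_comp_neg (a := 0) (b := 1) fun x : ℝ => √(1 - x ^ 2)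
    simp only [neg_sq, neg_zero] at this
    exact this.symm
  have := intervalIntegral.integral_add_adjacent_intervals
    (μ := MeasureTheory.volume) (hcont.intervalIntegrable (-1) 0) (hcont.intervalIntegrable 0 1)
  rw [integral_sqrt_one_sub_sq, hsymm] at this
  linarith

theorem integral_quarter_ellipse {a : ℝ} (ha : 0 < a) (b : ℝ) :
    ∫ x in 0..a, b * √(1 - (x / a) ^ 2) = π * a * b / 4 := by
  rw [intervalIntegral.integral_const_mul,
    intervalIntegral.integral_comp_div (fun x => √(1 - x ^ 2)) ha.ne', zero_div, div_self ha.ne',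
    integral_zero_one_sqrt_one_sub_sq, smul_eq_mul]
  ring

theorem ellipse_iff {a b x y : ℝ} (ha : 0 < a) (hb : 0 < b) (hy : 0 < y) :
    (x / a) ^ 2 + (y / b) ^ 2 < 1 ↔ x < a ∧ y < b * √(1 - (x / a) ^ 2) := by
  rw [mul_comm, ← div_lt_iff₀ hb, Real.lt_sqrt (by positivity)]
  refine ⟨fun h => ⟨?_, by linarith⟩, fun h => by linarith [h.2]⟩
  have : (x / a) ^ 2 < 1 ^ 2 := by nlinarith [sq_nonneg (y / b), div_pos hy hb]
  exact (div_lt_one ha).1 (lt_of_pow_lt_pow_left₀ 2 zero_le_one this)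

noncomputable def ellipseLatticeCount (a b : ℝ) : ℕ :=
  Nat.card {p : ℕ+ × ℕ+ // (((p.1 : ℕ) : ℝ) / a) ^ 2 + (((p.2 : ℕ) : ℝ) / b) ^ 2 < 1}

def ellipseLatticeEquivUnderGraph {a b : ℝ} (ha : 0 < a) (hb : 0 < b) :
    {p : ℕ+ × ℕ+ // (((p.1 : ℕ) : ℝ) / a) ^ 2 + (((p.2 : ℕ) : ℝ) / b) ^ 2 < 1} ≃
      {p : ℕ+ × ℕ+ //
        ((p.1 : ℕ) : ℝ) < a ∧ ((p.2 : ℕ) : ℝ) < b * √(1 - (((p.1 : ℕ) : ℝ) / a) ^ 2)} :=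
  Equiv.subtypeEquivRight fun p => ellipse_iff ha hb (Nat.cast_pos.2 p.2.pos)

theorem finite_ellipseLattice {a b : ℝ} (ha : 0 < a) (hb : 0 < b) :
    Finite {p : ℕ+ × ℕ+ // (((p.1 : ℕ) : ℝ) / a) ^ 2 + (((p.2 : ℕ) : ℝ) / b) ^ 2 < 1} :=
  have := finite_lattice_under_graph a fun x => b * √(1 - (x / a) ^ 2)
  Finite.of_equiv _ (ellipseLatticeEquivUnderGraph ha hb).symm

theorem abs_ellipseLatticeCount_sub_le {a b : ℝ} (ha : 0 < a) (hb : 0 < b) :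
    |(ellipseLatticeCount a b : ℝ) - π * a * b / 4| ≤ a + b := by
  have hf : AntitoneOn (fun x => b * √(1 - (x / a) ^ 2)) (Set.Ici 0) := by
    intro x hx y _ hxy
    have : 0 ≤ x / a := div_nonneg hx ha.le
    simp only
    gcongr
  have := abs_card_lattice_under_graph_sub_integral_le ha.le hf (fun x _ => by positivity)
  rw [integral_quarter_ellipse ha, ← Nat.card_congr (ellipseLatticeEquivUnderGraph ha hb),
    ← ellipseLatticeCount] at this
  simpa using this

theorem spectral_lt_iff_ellipse {d l lam : ℝ} (hlam : 0 < lam) (x y : ℝ) :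
    π ^ 2 * x ^ 2 / d ^ 2 + π ^ 2 * y ^ 2 / l ^ 2 < lam ↔
      (x / (d * √lam / π)) ^ 2 + (y / (l * √lam / π)) ^ 2 < 1 := by
  rw [← div_lt_one hlam]
  simp only [div_pow, mul_pow, Real.sq_sqrt hlam.le, div_div_eq_mul_div]
  ring_nf

theorem spectralCount_eq_sum_ellipseLatticeCount {δ ℓ : ℕ+ → ℝ} (hδ : ∀ i, 0 < δ i)
    (hℓ : ∀ i, 0 < ℓ i) {lam : ℝ} (hlam : 0 < lam) (hT : {i | δ i * √lam > π}.Finite) :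
    spectralCount δ ℓ lam =
      ∑ i ∈ hT.toFinset, ellipseLatticeCount (δ i * √lam / π) (ℓ i * √lam / π) := by
  have hA : ∀ i, 0 < δ i * √lam / π := fun i => by have := hδ i; positivity
  have hB : ∀ i, 0 < ℓ i * √lam / π := fun i => by have := hℓ i; positivity
  have hmem : ∀ (i n m : ℕ+), (((n : ℕ) : ℝ) / (δ i * √lam / π)) ^ 2
      + (((m : ℕ) : ℝ) / (ℓ i * √lam / π)) ^ 2 < 1 → i ∈ hT.toFinset := fun i n m h => by
    have hn := ((ellipse_iff (hA i) (hB i) (Nat.cast_pos.2 m.pos)).1 h).1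
    have : (1 : ℝ) ≤ (n : ℕ) := Nat.one_le_cast.2 n.pos
    rw [hT.mem_toFinset]
    exact (one_lt_div pi_pos).1 (by linarith)
  let e : {p : ℕ+ × ℕ+ × ℕ+ // π ^ 2 * ((p.2.2 : ℕ) : ℝ) ^ 2 / (δ p.1) ^ 2
      + π ^ 2 * ((p.2.1 : ℕ) : ℝ) ^ 2 / (ℓ p.1) ^ 2 < lam} ≃
      Σ i : hT.toFinset, {q : ℕ+ × ℕ+ // (((q.1 : ℕ) : ℝ) / (δ i * √lam / π)) ^ 2
        + (((q.2 : ℕ) : ℝ) / (ℓ i * √lam / π)) ^ 2 < 1} :=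
    { toFun p := ⟨⟨p.1.1, hmem _ _ _ ((spectral_lt_iff_ellipse hlam _ _).1 p.2)⟩,
        ⟨(p.1.2.2, p.1.2.1), (spectral_lt_iff_ellipse hlam _ _).1 p.2⟩⟩
      invFun q := ⟨(q.1.1, q.2.1.2, q.2.1.1), (spectral_lt_iff_ellipse hlam _ _).2 q.2.2⟩
      left_inv _ := rfl
      right_inv _ := rfl }
  have := fun i : hT.toFinset => finite_ellipseLattice (hA i) (hB i)
  rw [spectralCount, Nat.card_congr e, Nat.card_sigma]
  exact Finset.sum_coe_sort hT.toFinset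
    fun i => ellipseLatticeCount (δ i * √lam / π) (ℓ i * √lam / π)

theorem abs_ellipseLatticeCount_scaled_sub_le {d l lam : ℝ} (hd : 0 < d) (hl : 0 < l)
    (hlam : 0 < lam) :
    |(ellipseLatticeCount (d * √lam / π) (l * √lam / π) : ℝ) - lam / (4 * π) * (l * d)|
      ≤ (d + l) * √lam / π := by
  have hmain : π * (d * √lam / π) * (l * √lam / π) / 4 = lam / (4 * π) * (l * d) := by
    field_simp
    rw [Real.sq_sqrt hlam.le]
  have := abs_ellipseLatticeCount_sub_le (a := d * √lam / π) (b := l * √lam / π)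
    (by positivity) (by positivity)
  rwa [hmain, ← add_div, ← add_mul] at this

theorem stmt_2 (S : ℝ) :
    ∃ C > (0 : ℝ), ∀ δ ℓ : ℕ+ → ℝ, (∀ i, 0 < δ i) → (∀ i, 0 < ℓ i) →
      Summable δ → ∑' i, δ i = S →
      ∀ lam : ℝ, 1 ≤ lam →
        |(spectralCount δ ℓ lam : ℝ)
            - lam / (4 * π) * ∑ᶠ i ∈ {i : ℕ+ | δ i * Real.sqrt lam > π}, ℓ i * δ i|
          ≤ C * (1 + effLength δ ℓ lam) * Real.sqrt lam := by
  refine ⟨|S| + 1, by positivity, fun δ ℓ hδ hℓ hsum hS lam hlam => ?_⟩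
  have hlam0 : 0 < lam := by linarith
  have hsqrt : 0 < √lam := Real.sqrt_pos.2 hlam0
  have hT : {i | δ i * √lam > π}.Finite := by
    refine (Filter.eventually_cofinite.1 <| hsum.tendsto_cofinite_zero.eventually_lt_const
      (div_pos pi_pos hsqrt)).subset fun i hi hlt => ?_
    exact (lt_div_iff₀ hsqrt).not.2 (not_lt.2 hi.le) hlt
  have hδS : ∑ i ∈ hT.toFinset, δ i ≤ S := hS ▸ hsum.sum_le_tsum _ fun i _ => (hδ i).le
  have hδ0 : 0 ≤ ∑ i ∈ hT.toFinset, δ i := Finset.sum_nonneg fun i _ => (hδ i).le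
  have hℓ0 : 0 ≤ ∑ i ∈ hT.toFinset, ℓ i := Finset.sum_nonneg fun i _ => (hℓ i).le
  rw [finsum_mem_eq_finite_toFinset_sum _ hT, effLength, finsum_mem_eq_finite_toFinset_sum _ hT,
    spectralCount_eq_sum_ellipseLatticeCount hδ hℓ hlam0 hT, Nat.cast_sum, Finset.mul_sum,
    ← Finset.sum_sub_distrib]
  calc _ ≤ ∑ i ∈ hT.toFinset, (δ i + ℓ i) * √lam / π := (Finset.abs_sum_le_sum_abs _ _).trans
        (Finset.sum_le_sum fun i _ => abs_ellipseLatticeCount_scaled_sub_le (hδ i) (hℓ i) hlam0)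
    _ = (∑ i ∈ hT.toFinset, δ i + ∑ i ∈ hT.toFinset, ℓ i) * √lam / π := by
      rw [← Finset.sum_div, ← Finset.sum_mul, Finset.sum_add_distrib]
    _ ≤ (∑ i ∈ hT.toFinset, δ i + ∑ i ∈ hT.toFinset, ℓ i) * √lam :=
      div_le_self (by positivity) (by linarith [pi_gt_three])
    _ ≤ (|S| + 1) * (1 + 2 * ∑ i ∈ hT.toFinset, ℓ i) * √lam := by
      gcongr
      nlinarith [le_abs_self S, abs_nonneg S]
end

section
/- Let (μ_i)_{i≥1} and (ξ_i)_{i≥1} be sequences of positive reals with S := Σ_{i≥1} 1/√μ_i < ∞. For λ > 0 let N(λ) denote the (finite) number of triples of positive integers (i, m, n) with n²·μ_i + m²·ξ_i < λ. Then for every λ > 0: 0 ≤ Σ_{(i,n) : n²μ_i < λ} √((λ − n²μ_i)/ξ_i) − N(λ) ≤ S·√λ, where the sum runs over all pairs of positive integers (i, n) with n²·μ_i < λ (a finite set). -/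
/-! For an admissible pair (i, n) the positive integers m with n²μᵢ + m²ξᵢ < λ are those
below c = √((λ - n²μᵢ)/ξᵢ); there are ⌈c⌉ - 1 ∈ [c - 1, c] of them, so the difference in question
is a sum of numbers in [0, 1], one per admissible pair. For fixed i fewer than √(λ/μᵢ) values of n
are admissible, hence there are at most √λ · Σᵢ 1/√μᵢ admissible pairs; summability also leaves
only finitely many i with μᵢ < λ, which makes every sum finite. -/

open Real

lemma coe_image_setOf_pnat_lt (y : ℝ) :
    (fun m : ℕ+ => (m : ℕ)) '' {m : ℕ+ | ((m : ℕ) : ℝ) < y} = Set.Ico 1 ⌈y⌉₊ := by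
  ext k
  constructor
  · rintro ⟨m, hm, rfl⟩
    exact ⟨m.pos, Nat.lt_ceil.2 hm⟩
  · rintro ⟨hk, hky⟩
    exact ⟨⟨k, hk⟩, Nat.lt_ceil.1 hky, rfl⟩

lemma finite_setOf_pnat_lt (y : ℝ) : {m : ℕ+ | ((m : ℕ) : ℝ) < y}.Finite :=
  Set.Finite.of_finite_image (by rw [coe_image_setOf_pnat_lt]; exact Set.finite_Ico _ _)
    PNat.coe_injective.injOn

lemma ncard_setOf_pnat_lt (y : ℝ) : {m : ℕ+ | ((m : ℕ) : ℝ) < y}.ncard = ⌈y⌉₊ - 1 := by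
  rw [← Set.ncard_image_of_injective _ PNat.coe_injective, coe_image_setOf_pnat_lt,
    Set.ncard_Ico_nat]

lemma ncard_setOf_pnat_lt_le {y : ℝ} (hy : 0 ≤ y) :
    ({m : ℕ+ | ((m : ℕ) : ℝ) < y}.ncard : ℝ) ≤ y := by
  rw [ncard_setOf_pnat_lt]
  rcases Nat.eq_zero_or_pos ⌈y⌉₊ with h | h
  · simp [h, hy]
  · rw [Nat.cast_pred h]
    linarith [Nat.ceil_lt_add_one hy]

lemma sub_one_le_ncard_setOf_pnat_lt (y : ℝ) :
    y - 1 ≤ ({m : ℕ+ | ((m : ℕ) : ℝ) < y}.ncard : ℝ) := by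
  rw [ncard_setOf_pnat_lt]
  rcases Nat.eq_zero_or_pos ⌈y⌉₊ with h | h
  · simp only [h, Nat.zero_sub, Nat.cast_zero, sub_nonpos]
    exact (Nat.ceil_eq_zero.1 h).trans zero_le_one
  · rw [Nat.cast_pred h]
    linarith [Nat.le_ceil y]

section Fibers

variable {α β : Type*}

lemma setOf_fst_mem_snd_mem_eq_biUnion (A : Set α) (T : α → Set β) :
    {x : α × β | x.1 ∈ A ∧ x.2 ∈ T x.1} = ⋃ a ∈ A, Prod.mk a '' T a := by
  ext ⟨a, b⟩
  simp [and_comm]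

lemma Set.Finite.setOf_fst_mem_snd_mem {A : Set α} (hA : A.Finite) {T : α → Set β}
    (hT : ∀ a ∈ A, (T a).Finite) : {x : α × β | x.1 ∈ A ∧ x.2 ∈ T x.1}.Finite := by
  rw [setOf_fst_mem_snd_mem_eq_biUnion]
  exact hA.biUnion fun a ha => (hT a ha).image _

lemma Set.Finite.ncard_setOf_fst_mem_snd_mem {A : Set α} (hA : A.Finite) {T : α → Set β}
    (hT : ∀ a ∈ A, (T a).Finite) :
    {x : α × β | x.1 ∈ A ∧ x.2 ∈ T x.1}.ncard = ∑ᶠ a ∈ A, (T a).ncard := by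
  rw [setOf_fst_mem_snd_mem_eq_biUnion, hA.ncard_biUnion fun a ha => (hT a ha).image _]
  · exact finsum_mem_congr rfl fun a _ =>
      Set.ncard_image_of_injective _ (Prod.mk_right_injective a)
  · intro a _ a' _ haa'
    refine Set.disjoint_left.2 ?_
    rintro _ ⟨b, _, rfl⟩ ⟨b', _, hb'⟩
    exact haa' (congrArg Prod.fst hb').symm

end Fibers

lemma sq_mul_lt_iff_lt_sqrt {x c d : ℝ} (hx : 0 ≤ x) (hc : 0 < c) :
    x ^ 2 * c < d ↔ x < √(d / c) := by
  rw [Real.lt_sqrt hx, lt_div_iff₀ hc]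

lemma add_sq_mul_lt_iff {u y b lam : ℝ} (hy : 0 < y) (hb : 0 < b) :
    u + y ^ 2 * b < lam ↔ u < lam ∧ y < √((lam - u) / b) := by
  rw [← sq_mul_lt_iff_lt_sqrt hy.le hb]
  constructor
  · intro h
    exact ⟨by nlinarith [mul_pos (pow_pos hy 2) hb], by linarith⟩
  · rintro ⟨-, h⟩
    linarith

section Admissible

variable {ι : Type*} {μ : ι → ℝ}

lemma finite_setOf_lt_of_summable_one_div_sqrt (hμ : ∀ i, 0 < μ i)
    (hsum : Summable fun i => 1 / √(μ i)) {lam : ℝ} (hlam : 0 < lam) :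
    {i | μ i < lam}.Finite := by
  have hsmall : ∀ᶠ i in Filter.cofinite, 1 / √(μ i) < 1 / √lam :=
    hsum.tendsto_cofinite_zero.eventually (gt_mem_nhds (by positivity))
  refine (Filter.eventually_cofinite.1 hsmall).subset fun i (hi : μ i < lam) => ?_
  exact not_lt.2 (one_div_le_one_div_of_le (sqrt_pos.2 (hμ i))
    (sqrt_le_sqrt hi.le))

lemma setOf_sq_mul_lt_eq (hμ : ∀ i, 0 < μ i) (lam : ℝ) :
    {p : ι × ℕ+ | ((p.2 : ℕ) : ℝ) ^ 2 * μ p.1 < lam} =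
      {p | p.1 ∈ {i | μ i < lam} ∧ p.2 ∈ {n : ℕ+ | ((n : ℕ) : ℝ) < √(lam / μ p.1)}} := by
  ext ⟨i, n⟩
  simp only [Set.mem_ofPred_eq, ← sq_mul_lt_iff_lt_sqrt (Nat.cast_nonneg _) (hμ i)]
  have hn : (1 : ℝ) ≤ ((n : ℕ) : ℝ) ^ 2 := one_le_pow₀ (Nat.one_le_cast.2 n.pos)
  constructor
  · intro h
    exact ⟨by nlinarith [hμ i], h⟩
  · exact And.right

lemma finite_setOf_sq_mul_lt (hμ : ∀ i, 0 < μ i) (hsum : Summable fun i => 1 / √(μ i))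
    {lam : ℝ} (hlam : 0 < lam) :
    {p : ι × ℕ+ | ((p.2 : ℕ) : ℝ) ^ 2 * μ p.1 < lam}.Finite := by
  rw [setOf_sq_mul_lt_eq hμ]
  exact (finite_setOf_lt_of_summable_one_div_sqrt hμ hsum hlam).setOf_fst_mem_snd_mem
    (T := fun i => {n : ℕ+ | ((n : ℕ) : ℝ) < √(lam / μ i)}) fun i _ => finite_setOf_pnat_lt _

lemma ncard_setOf_sq_mul_lt_le (hμ : ∀ i, 0 < μ i) (hsum : Summable fun i => 1 / √(μ i))
    {lam : ℝ} (hlam : 0 < lam) :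
    ({p : ι × ℕ+ | ((p.2 : ℕ) : ℝ) ^ 2 * μ p.1 < lam}.ncard : ℝ) ≤
      √lam * ∑' i, 1 / √(μ i) := by
  have hI := finite_setOf_lt_of_summable_one_div_sqrt hμ hsum hlam
  rw [setOf_sq_mul_lt_eq hμ, hI.ncard_setOf_fst_mem_snd_mem
    (T := fun i => {n : ℕ+ | ((n : ℕ) : ℝ) < √(lam / μ i)}) fun i _ => finite_setOf_pnat_lt _,
    finsum_mem_eq_finite_toFinset_sum _ hI, Nat.cast_sum]
  set I := hI.toFinset
  calc ∑ i ∈ I, ({n : ℕ+ | ((n : ℕ) : ℝ) < √(lam / μ i)}.ncard : ℝ)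
      ≤ ∑ i ∈ I, √lam * (1 / √(μ i)) := Finset.sum_le_sum fun i _ => by
        rw [← div_eq_mul_one_div, ← sqrt_div' _ (hμ i).le]
        exact ncard_setOf_pnat_lt_le (sqrt_nonneg _)
    _ ≤ ∑' i, √lam * (1 / √(μ i)) :=
        (hsum.mul_left _).sum_le_tsum I fun i _ => by positivity
    _ = √lam * ∑' i, 1 / √(μ i) := hsum.tsum_mul_left _

lemma card_setOf_sq_mul_add_sq_mul_lt (μ : ι → ℝ) {ξ : ι → ℝ} (hξ : ∀ i, 0 < ξ i) {lam : ℝ}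
    (hA : {p : ι × ℕ+ | ((p.2 : ℕ) : ℝ) ^ 2 * μ p.1 < lam}.Finite) :
    Nat.card {q : ι × ℕ+ × ℕ+ //
      ((q.2.2 : ℕ) : ℝ) ^ 2 * μ q.1 + ((q.2.1 : ℕ) : ℝ) ^ 2 * ξ q.1 < lam} =
      ∑ᶠ p ∈ {p : ι × ℕ+ | ((p.2 : ℕ) : ℝ) ^ 2 * μ p.1 < lam},
        {m : ℕ+ | ((m : ℕ) : ℝ) < √((lam - ((p.2 : ℕ) : ℝ) ^ 2 * μ p.1) / ξ p.1)}.ncard := by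
  let e : ι × ℕ+ × ℕ+ ≃ (ι × ℕ+) × ℕ+ :=
    ⟨fun q => ((q.1, q.2.2), q.2.1), fun x => (x.1.1, x.2, x.1.2), fun _ => rfl, fun _ => rfl⟩
  rw [← hA.ncard_setOf_fst_mem_snd_mem (T := fun p =>
      {m : ℕ+ | ((m : ℕ) : ℝ) < √((lam - ((p.2 : ℕ) : ℝ) ^ 2 * μ p.1) / ξ p.1)})
    fun p _ => finite_setOf_pnat_lt _, ← Nat.card_coe_set_eq]
  refine Nat.card_congr (e.subtypeEquiv fun q => ?_)
  rw [add_sq_mul_lt_iff (by exact_mod_cast q.2.1.pos) (hξ q.1)]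
  rfl

end Admissible

theorem stmt_6 (μ ξ : ℕ+ → ℝ) (hμ : ∀ i, 0 < μ i) (hξ : ∀ i, 0 < ξ i)
    (S : ℝ) (hSsum : Summable fun i => 1 / Real.sqrt (μ i))
    (hS : ∑' i, 1 / Real.sqrt (μ i) = S)
    (lam : ℝ) (hlam : 0 < lam) :
    0 ≤ (∑ᶠ p ∈ {p : ℕ+ × ℕ+ | ((p.2 : ℕ) : ℝ) ^ 2 * μ p.1 < lam},
          Real.sqrt ((lam - ((p.2 : ℕ) : ℝ) ^ 2 * μ p.1) / ξ p.1))
        - (Nat.card {q : ℕ+ × ℕ+ × ℕ+ //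
            ((q.2.2 : ℕ) : ℝ) ^ 2 * μ q.1 + ((q.2.1 : ℕ) : ℝ) ^ 2 * ξ q.1 < lam} : ℝ)
    ∧ (∑ᶠ p ∈ {p : ℕ+ × ℕ+ | ((p.2 : ℕ) : ℝ) ^ 2 * μ p.1 < lam},
          Real.sqrt ((lam - ((p.2 : ℕ) : ℝ) ^ 2 * μ p.1) / ξ p.1))
        - (Nat.card {q : ℕ+ × ℕ+ × ℕ+ //
            ((q.2.2 : ℕ) : ℝ) ^ 2 * μ q.1 + ((q.2.1 : ℕ) : ℝ) ^ 2 * ξ q.1 < lam} : ℝ)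
      ≤ S * Real.sqrt lam := by
  have hA := finite_setOf_sq_mul_lt hμ hSsum hlam
  rw [card_setOf_sq_mul_add_sq_mul_lt μ hξ hA, finsum_mem_eq_finite_toFinset_sum _ hA,
    finsum_mem_eq_finite_toFinset_sum _ hA, Nat.cast_sum, ← Finset.sum_sub_distrib]
  refine ⟨Finset.sum_nonneg fun _ _ => sub_nonneg.2 (ncard_setOf_pnat_lt_le (sqrt_nonneg _)), ?_⟩
  calc _ ≤ ∑ _ ∈ hA.toFinset, (1 : ℝ) :=
        Finset.sum_le_sum fun _ _ => sub_le_comm.2 (sub_one_le_ncard_setOf_pnat_lt _)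
    _ = ({p : ℕ+ × ℕ+ | ((p.2 : ℕ) : ℝ) ^ 2 * μ p.1 < lam}.ncard : ℝ) := by
        simp [Set.ncard_eq_toFinset_card _ hA]
    _ ≤ √lam * ∑' i, 1 / √(μ i) := ncard_setOf_sq_mul_lt_le hμ hSsum hlam
    _ = S * √lam := by rw [hS, mul_comm]
end

section
/- Let (X, 𝔪) be a measure space, (φ_j)_{j∈ℕ} a Hilbert basis (orthonormal basis) of the complex Hilbert space L²(X, 𝔪), ψ ∈ L²(X, 𝔪), A ⊆ X a measurable set, and J ⊆ ℕ a finite set. Then ‖1_A·ψ‖ ≤ ‖ψ‖·√(Σ_{j∈J} ‖1_A·φ_j‖²) + √(Σ_{j∉J} |⟨ψ, φ_j⟩|²), where ‖·‖ and ⟨·,·⟩ denote the L²(X, 𝔪) norm and inner product, and 1_A·f denotes the pointwise product of f with the indicator function of A (the series Σ_{j∉J} |⟨ψ, φ_j⟩|² converges by Bessel's inequality). -/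
/-!
Split `ψ` into its Fourier partial sum `ψ_J = ∑_{j ∈ J} ⟪φ j, ψ⟫ φ j` and the remainder.
Restriction to `A` is a linear contraction `L²(m) → L²(m|_A)`, so the remainder contributes at most
its full norm, which by Parseval is the tail `√(∑_{j ∉ J} |⟪ψ, φ j⟫|²)`. The partial sum
contributes at most `∑_{j ∈ J} |⟪φ j, ψ⟫| ‖1_A φ j‖`, which Cauchy–Schwarz and Bessel's inequality
bound by `‖ψ‖ √(∑_{j ∈ J} ‖1_A φ j‖²)`.
-/

open MeasureTheory
open scoped InnerProductSpace ENNReal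

section HilbertBasis

variable {ι 𝕜 E F : Type*} [RCLike 𝕜] [NormedAddCommGroup E] [InnerProductSpace 𝕜 E]
  [NormedAddCommGroup F] [NormedSpace 𝕜 F]

theorem Orthonormal.norm_map_sum_inner_smul_le {v : ι → E} (hv : Orthonormal 𝕜 v)
    (T : E →ₗ[𝕜] F) (x : E) (s : Finset ι) :
    ‖T (∑ i ∈ s, ⟪v i, x⟫_𝕜 • v i)‖ ≤ ‖x‖ * √(∑ i ∈ s, ‖T (v i)‖ ^ 2) := by
  have bessel : √(∑ i ∈ s, ‖⟪v i, x⟫_𝕜‖ ^ 2) ≤ ‖x‖ :=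
    (Real.sqrt_le_sqrt (hv.sum_inner_products_le x)).trans_eq (Real.sqrt_sq (norm_nonneg x))
  calc ‖T (∑ i ∈ s, ⟪v i, x⟫_𝕜 • v i)‖
      ≤ ∑ i ∈ s, ‖⟪v i, x⟫_𝕜‖ * ‖T (v i)‖ := by
        rw [map_sum]
        exact (norm_sum_le _ _).trans_eq (by simp only [map_smul, norm_smul])
    _ ≤ √(∑ i ∈ s, ‖⟪v i, x⟫_𝕜‖ ^ 2) * √(∑ i ∈ s, ‖T (v i)‖ ^ 2) :=
        Real.sum_mul_le_sqrt_mul_sqrt _ _ _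
    _ ≤ ‖x‖ * √(∑ i ∈ s, ‖T (v i)‖ ^ 2) := by gcongr

theorem HilbertBasis.sq_norm_eq_tsum (b : HilbertBasis ι 𝕜 E) (x : E) :
    ‖x‖ ^ 2 = ∑' i, ‖⟪b i, x⟫_𝕜‖ ^ 2 := by
  rw [← b.repr.norm_map x]
  simpa [b.repr_apply_apply] using lp.norm_rpow_eq_tsum (p := 2) (by norm_num) (b.repr x)

theorem HilbertBasis.norm_sub_sum_inner_smul (b : HilbertBasis ι 𝕜 E) (x : E)
    (s : Finset ι) :
    ‖x - ∑ i ∈ s, ⟪b i, x⟫_𝕜 • b i‖ = √(∑' i : {i // i ∉ s}, ‖⟪x, b i⟫_𝕜‖ ^ 2) := by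
  classical
  have coeff (k : ι) : ⟪b k, x - ∑ i ∈ s, ⟪b i, x⟫_𝕜 • b i⟫_𝕜
      = if k ∈ s then 0 else ⟪b k, x⟫_𝕜 := by
    rw [inner_sub_right, inner_sum]
    simp only [inner_smul_right, orthonormal_iff_ite.mp b.orthonormal, mul_ite, mul_one, mul_zero,
      Finset.sum_ite_eq]
    split_ifs <;> simp
  rw [← Real.sqrt_sq (norm_nonneg _), b.sq_norm_eq_tsum]
  congr 1
  refine Eq.trans ?_ (tsum_subtype {i | i ∉ s} fun i => ‖⟪x, b i⟫_𝕜‖ ^ 2).symm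
  refine tsum_congr fun k => ?_
  by_cases hk : k ∈ s <;> simp [coeff, hk, norm_inner_symm]

theorem HilbertBasis.norm_map_le (b : HilbertBasis ι 𝕜 E) (T : E →L[𝕜] F)
    (x : E) (s : Finset ι) :
    ‖T x‖ ≤ ‖x‖ * √(∑ i ∈ s, ‖T (b i)‖ ^ 2)
      + ‖T‖ * √(∑' i : {i // i ∉ s}, ‖⟪x, b i⟫_𝕜‖ ^ 2) := by
  set partialSum := ∑ i ∈ s, ⟪b i, x⟫_𝕜 • b i
  calc ‖T x‖ = ‖T partialSum + T (x - partialSum)‖ := by rw [← map_add, add_sub_cancel]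
    _ ≤ ‖T partialSum‖ + ‖T‖ * ‖x - partialSum‖ := norm_add_le_of_le le_rfl (T.le_opNorm _)
    _ ≤ _ := by
      rw [b.norm_sub_sum_inner_smul]
      gcongr
      exact b.orthonormal.norm_map_sum_inner_smul_le T.toLinearMap x s

end HilbertBasis

namespace MeasureTheory

theorem L2.sq_norm_eq_integral {α 𝕜 E : Type*} [MeasurableSpace α] {μ : Measure α} [RCLike 𝕜]
    [NormedAddCommGroup E] [InnerProductSpace 𝕜 E] (f : Lp E 2 μ) :
    ‖f‖ ^ 2 = ∫ a, ‖f a‖ ^ 2 ∂μ := by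
  rw [← inner_self_eq_norm_sq (𝕜 := 𝕜), L2.inner_def, ← integral_re (L2.integrable_inner f f)]
  simp only [inner_self_eq_norm_sq]

theorem sq_norm_LpToLpRestrictCLM_apply {α 𝕜 E : Type*} [MeasurableSpace α] {μ : Measure α}
    [RCLike 𝕜] [NormedAddCommGroup E] [InnerProductSpace 𝕜 E] (s : Set α) (f : Lp E 2 μ) :
    ‖LpToLpRestrictCLM α E 𝕜 μ 2 s f‖ ^ 2 = ∫ a in s, ‖f a‖ ^ 2 ∂μ := by
  rw [L2.sq_norm_eq_integral (𝕜 := 𝕜)]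
  refine integral_congr_ae ?_
  filter_upwards [LpToLpRestrictCLM_coeFn 𝕜 s f] with a ha
  rw [ha]

theorem norm_LpToLpRestrictCLM_le {α F 𝕜 : Type*} [MeasurableSpace α] [RCLike 𝕜]
    [NormedAddCommGroup F] [NormedSpace 𝕜 F] (μ : Measure α) (p : ℝ≥0∞) [Fact (1 ≤ p)]
    (s : Set α) :
    ‖LpToLpRestrictCLM α F 𝕜 μ p s‖ ≤ 1 :=
  LinearMap.mkContinuous_norm_le _ zero_le_one _

end MeasureTheory

theorem stmt_9_general {X : Type*} [MeasurableSpace X] (m : Measure X)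
    (φ : HilbertBasis ℕ ℂ (Lp ℂ 2 m)) (ψ : Lp ℂ 2 m)
    (A : Set X) (J : Finset ℕ) :
    Real.sqrt (∫ x in A, ‖ψ x‖ ^ 2 ∂m)
      ≤ ‖ψ‖ * Real.sqrt (∑ j ∈ J, ∫ x in A, ‖(φ j) x‖ ^ 2 ∂m)
        + Real.sqrt (∑' j : {j : ℕ // j ∉ J}, ‖(inner ℂ ψ (φ (j : ℕ)) : ℂ)‖ ^ 2) := by
  set restrictA := LpToLpRestrictCLM X ℂ ℂ m 2 A
  have sq_norm_restrictA (f : Lp ℂ 2 m) : ‖restrictA f‖ ^ 2 = ∫ x in A, ‖f x‖ ^ 2 ∂m :=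
    sq_norm_LpToLpRestrictCLM_apply A f
  calc √(∫ x in A, ‖ψ x‖ ^ 2 ∂m) = ‖restrictA ψ‖ := by
        rw [← sq_norm_restrictA, Real.sqrt_sq (norm_nonneg _)]
    _ ≤ ‖ψ‖ * √(∑ j ∈ J, ‖restrictA (φ j)‖ ^ 2)
          + ‖restrictA‖ * √(∑' j : {j : ℕ // j ∉ J}, ‖⟪ψ, φ j⟫_ℂ‖ ^ 2) := φ.norm_map_le _ ψ J
    _ ≤ ‖ψ‖ * √(∑ j ∈ J, ∫ x in A, ‖φ j x‖ ^ 2 ∂m)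
          + √(∑' j : {j : ℕ // j ∉ J}, ‖⟪ψ, φ j⟫_ℂ‖ ^ 2) := by
        simp only [sq_norm_restrictA]
        gcongr _ + ?_
        exact mul_le_of_le_one_left (Real.sqrt_nonneg _) (norm_LpToLpRestrictCLM_le m 2 A)

theorem stmt_9 {X : Type*} [MeasurableSpace X] (m : Measure X)
    (φ : HilbertBasis ℕ ℂ (Lp ℂ 2 m)) (ψ : Lp ℂ 2 m)
    (A : Set X) (hA : MeasurableSet A) (J : Finset ℕ) :
    Real.sqrt (∫ x in A, ‖ψ x‖ ^ 2 ∂m)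
      ≤ ‖ψ‖ * Real.sqrt (∑ j ∈ J, ∫ x in A, ‖(φ j) x‖ ^ 2 ∂m)
        + Real.sqrt (∑' j : {j : ℕ // j ∉ J}, ‖(inner ℂ ψ (φ (j : ℕ)) : ℂ)‖ ^ 2) :=
  stmt_9_general m φ ψ A J
end

section
/- Let (X, 𝔪) be a measure space, (φ_j)_{j∈ℕ} a Hilbert basis (orthonormal basis) of the complex Hilbert space L²(X, 𝔪), ψ ∈ L²(X, 𝔪) with ψ ≠ 0, A ⊆ X a measurable set, λ : ℕ → ℝ, μ ∈ ℝ, ε > 0, b > 1, and k a positive integer. Assume that (|⟨ψ, φ_j⟩|²·(λ_j − μ)²)_{j∈ℕ} is summable with Σ_j |⟨ψ, φ_j⟩|²·(λ_j − μ)² ≤ ε²·‖ψ‖², and that the set J := { j ∈ ℕ : |λ_j − μ| ≤ bε } is finite with at most k elements. Then there exists j ∈ J such that ‖1_A·φ_j‖ ≥ (1/√k)·( ‖1_A·ψ‖/‖ψ‖ − 1/b ). -/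
/-! Let `P` be the orthogonal projection of `ψ` onto the span of the `φ j`, `j ∈ J`. Off `J` we
have `|λ j - μ| > b ε`, so the discrepancy bound gives `‖ψ - P‖ ≤ ‖ψ‖ / b` (Chebyshev); in
particular `J` is nonempty. Restriction to `A` is a contraction, hence
`‖1_A ψ‖ ≤ ∑_{j ∈ J} |⟪φ j, ψ⟫| ‖1_A φ j‖ + ‖ψ‖ / b`, and by Cauchy–Schwarz and Bessel the
coefficient sum is at most `√k ‖ψ‖`. Take `j ∈ J` maximising `‖1_A φ j‖`. -/

open MeasureTheory Finset
open scoped InnerProductSpace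

section Orthonormal

variable {ι 𝕜 E F : Type*} [RCLike 𝕜] [SeminormedAddCommGroup E] [InnerProductSpace 𝕜 E]
  [SeminormedAddCommGroup F] [NormedSpace 𝕜 F]

theorem Orthonormal.inner_sub_sum_inner_smul [DecidableEq ι] {v : ι → E} (hv : Orthonormal 𝕜 v)
    (s : Finset ι) (x : E) (i : ι) :
    ⟪v i, x - ∑ j ∈ s, ⟪v j, x⟫_𝕜 • v j⟫_𝕜 = if i ∈ s then 0 else ⟪v i, x⟫_𝕜 := by
  simp only [inner_sub_right, inner_sum, inner_smul_right, orthonormal_iff_ite.mp hv]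
  split_ifs <;> simp_all

theorem Orthonormal.sum_norm_inner_le {v : ι → E} (hv : Orthonormal 𝕜 v) (s : Finset ι)
    (x : E) : ∑ i ∈ s, ‖⟪v i, x⟫_𝕜‖ ≤ √(#s : ℝ) * ‖x‖ := by
  calc ∑ i ∈ s, ‖⟪v i, x⟫_𝕜‖ = ∑ i ∈ s, 1 * ‖⟪v i, x⟫_𝕜‖ := by simp
    _ ≤ √(∑ i ∈ s, 1 ^ 2) * √(∑ i ∈ s, ‖⟪v i, x⟫_𝕜‖ ^ 2) := Real.sum_mul_le_sqrt_mul_sqrt _ _ _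
    _ ≤ √(#s : ℝ) * √(‖x‖ ^ 2) := by
      simp only [one_pow, sum_const, nsmul_eq_mul, mul_one]
      gcongr
      exact hv.sum_inner_products_le x
    _ = √(#s : ℝ) * ‖x‖ := by rw [Real.sqrt_sq (norm_nonneg x)]

theorem Orthonormal.exists_norm_apply_le {v : ι → E} (hv : Orthonormal 𝕜 v) (T : E →ₗ[𝕜] F)
    (hT : ∀ y, ‖T y‖ ≤ ‖y‖) {s : Finset ι} (hs : s.Nonempty) (x : E) :
    ∃ i ∈ s, ‖T x‖ ≤ √(#s : ℝ) * ‖x‖ * ‖T (v i)‖ + ‖x - ∑ j ∈ s, ⟪v j, x⟫_𝕜 • v j‖ := by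
  obtain ⟨i, hi, hmax⟩ := s.exists_max_image (fun j => ‖T (v j)‖) hs
  refine ⟨i, hi, ?_⟩
  set P := ∑ j ∈ s, ⟪v j, x⟫_𝕜 • v j
  calc ‖T x‖ = ‖T P + T (x - P)‖ := by rw [← map_add, add_sub_cancel]
    _ ≤ ‖T P‖ + ‖x - P‖ := (norm_add_le _ _).trans (by gcongr; exact hT _)
    _ ≤ ∑ j ∈ s, ‖⟪v j, x⟫_𝕜‖ * ‖T (v j)‖ + ‖x - P‖ := by
      gcongr
      simp only [P, map_sum, map_smul]
      exact (norm_sum_le _ _).trans_eq (sum_congr rfl fun j _ => norm_smul _ _)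
    _ ≤ ∑ j ∈ s, ‖⟪v j, x⟫_𝕜‖ * ‖T (v i)‖ + ‖x - P‖ := by
      gcongr with j hj
      exact hmax j hj
    _ ≤ √(#s : ℝ) * ‖x‖ * ‖T (v i)‖ + ‖x - P‖ := by
      rw [← sum_mul]
      gcongr
      exact hv.sum_norm_inner_le s x

end Orthonormal

namespace HilbertBasis

variable {ι 𝕜 E : Type*} [RCLike 𝕜] [NormedAddCommGroup E] [InnerProductSpace 𝕜 E]

theorem hasSum_norm_inner_sq (b : HilbertBasis ι 𝕜 E) (x : E) :
    HasSum (fun i => ‖⟪b i, x⟫_𝕜‖ ^ 2) (‖x‖ ^ 2) := by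
  have h := lp.hasSum_norm (p := 2) (by simp) (b.repr x)
  simp only [b.repr_apply_apply, LinearIsometryEquiv.norm_map] at h
  exact_mod_cast h

theorem sq_mul_norm_sub_sum_sq_le (b : HilbertBasis ι 𝕜 E) (x : E) {s : Finset ι}
    {d : ι → ℝ} {r : ℝ} (hs : ∀ i ∉ s, r ^ 2 ≤ d i ^ 2)
    (hsum : Summable fun i => ‖⟪b i, x⟫_𝕜‖ ^ 2 * d i ^ 2) :
    r ^ 2 * ‖x - ∑ i ∈ s, ⟪b i, x⟫_𝕜 • b i‖ ^ 2 ≤ ∑' i, ‖⟪b i, x⟫_𝕜‖ ^ 2 * d i ^ 2 := by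
  classical
  refine hasSum_le (fun i => ?_) ((b.hasSum_norm_inner_sq _).mul_left (r ^ 2)) hsum.hasSum
  rw [b.orthonormal.inner_sub_sum_inner_smul]
  split_ifs with hi
  · rw [norm_zero, zero_pow two_ne_zero, mul_zero]
    positivity
  · rw [mul_comm]
    exact mul_le_mul_of_nonneg_left (hs i hi) (by positivity)

theorem norm_sub_sum_le_div (b : HilbertBasis ι 𝕜 E) (x : E) {s : Finset ι} {d : ι → ℝ}
    {ε c : ℝ} (hε : 0 < ε) (hc : 0 < c) (hs : ∀ i ∉ s, c * ε ≤ |d i|)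
    (hsum : Summable fun i => ‖⟪b i, x⟫_𝕜‖ ^ 2 * d i ^ 2)
    (hbound : ∑' i, ‖⟪b i, x⟫_𝕜‖ ^ 2 * d i ^ 2 ≤ ε ^ 2 * ‖x‖ ^ 2) :
    ‖x - ∑ i ∈ s, ⟪b i, x⟫_𝕜 • b i‖ ≤ ‖x‖ / c := by
  have hs' : ∀ i ∉ s, (c * ε) ^ 2 ≤ d i ^ 2 := fun i hi =>
    sq_le_sq.2 <| (abs_of_pos (mul_pos hc hε)).trans_le (hs i hi)
  have h := (b.sq_mul_norm_sub_sum_sq_le x hs' hsum).trans hbound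
  rw [le_div_iff₀ hc, ← mul_le_mul_iff_of_pos_left hε]
  refine le_of_pow_le_pow_left₀ two_ne_zero (by positivity) ?_
  calc (ε * (‖x - ∑ i ∈ s, ⟪b i, x⟫_𝕜 • b i‖ * c)) ^ 2
      = (c * ε) ^ 2 * ‖x - ∑ i ∈ s, ⟪b i, x⟫_𝕜 • b i‖ ^ 2 := by ring
    _ ≤ ε ^ 2 * ‖x‖ ^ 2 := h
    _ = (ε * ‖x‖) ^ 2 := by ring

end HilbertBasis

namespace MeasureTheory

variable {α E : Type*} [MeasurableSpace α] {μ : Measure α} [NormedAddCommGroup E]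

theorem Lp.norm_eq_sqrt_integral_norm_sq (f : Lp E 2 μ) : ‖f‖ = √(∫ a, ‖f a‖ ^ 2 ∂μ) := by
  rw [Lp.norm_def, toReal_eLpNorm (Lp.aestronglyMeasurable f), lpNorm_eq_integral_norm_rpow_toReal
    two_ne_zero ENNReal.ofNat_ne_top (Lp.aestronglyMeasurable f)]
  simp [Real.sqrt_eq_rpow]

theorem sqrt_setIntegral_norm_sq_eq_norm_LpToLpRestrictCLM (𝕜 : Type*) [NormedField 𝕜]
    [NormedSpace 𝕜 E] (f : Lp E 2 μ) (A : Set α) :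
    √(∫ a in A, ‖f a‖ ^ 2 ∂μ) = ‖LpToLpRestrictCLM α E 𝕜 μ 2 A f‖ := by
  rw [Lp.norm_eq_sqrt_integral_norm_sq]
  congr 1
  refine integral_congr_ae ?_
  filter_upwards [LpToLpRestrictCLM_coeFn 𝕜 A f] with a ha
  rw [ha]

end MeasureTheory

theorem stmt_10_general {X : Type*} [MeasurableSpace X] (m : Measure X)
    (φ : HilbertBasis ℕ ℂ (Lp ℂ 2 m)) (ψ : Lp ℂ 2 m) (hψ : ψ ≠ 0)
    (A : Set X)
    (lam : ℕ → ℝ) (μ ε b : ℝ) (hε : 0 < ε) (hb : 1 < b) (k : ℕ)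
    (hsum : Summable fun j => ‖(inner ℂ ψ (φ j) : ℂ)‖ ^ 2 * (lam j - μ) ^ 2)
    (hbound : ∑' j, ‖(inner ℂ ψ (φ j) : ℂ)‖ ^ 2 * (lam j - μ) ^ 2 ≤ ε ^ 2 * ‖ψ‖ ^ 2)
    (hJfin : {j : ℕ | |lam j - μ| ≤ b * ε}.Finite)
    (hJcard : hJfin.toFinset.card ≤ k) :
    ∃ j : ℕ, |lam j - μ| ≤ b * ε ∧
      Real.sqrt (∫ x in A, ‖(φ j) x‖ ^ 2 ∂m)
        ≥ 1 / Real.sqrt k *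
            (Real.sqrt (∫ x in A, ‖ψ x‖ ^ 2 ∂m) / ‖ψ‖ - 1 / b) := by
  set J := hJfin.toFinset
  have hψ0 : 0 < ‖ψ‖ := norm_pos_iff.2 hψ
  simp only [norm_inner_symm ψ] at hsum hbound
  have hres : ‖ψ - ∑ j ∈ J, ⟪φ j, ψ⟫_ℂ • φ j‖ ≤ ‖ψ‖ / b :=
    φ.norm_sub_sum_le_div ψ hε (zero_lt_one.trans hb)
      (fun j hj => (not_le.1 (hj ∘ hJfin.mem_toFinset.2)).le) hsum hbound
  have hJ : J.Nonempty := nonempty_iff_ne_empty.2 fun hJ => by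
    rw [hJ, sum_empty, sub_zero] at hres
    exact (div_lt_self hψ0 hb).not_ge hres
  obtain ⟨j, hj, hloc⟩ := φ.orthonormal.exists_norm_apply_le
    (T := (LpToLpRestrictCLM X ℂ ℂ m 2 A).toLinearMap) (norm_Lp_toLp_restrict_le A) hJ ψ
  simp only [ContinuousLinearMap.coe_coe] at hloc
  refine ⟨j, hJfin.mem_toFinset.1 hj, ?_⟩
  rw [sqrt_setIntegral_norm_sq_eq_norm_LpToLpRestrictCLM ℂ,
    sqrt_setIntegral_norm_sq_eq_norm_LpToLpRestrictCLM ℂ, ge_iff_le, one_div_mul_eq_div]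
  refine div_le_of_le_mul₀ (Real.sqrt_nonneg _) (norm_nonneg _) ?_
  rw [sub_le_iff_le_add, div_le_iff₀ hψ0]
  set M := ‖LpToLpRestrictCLM X ℂ ℂ m 2 A (φ j)‖
  calc ‖LpToLpRestrictCLM X ℂ ℂ m 2 A ψ‖ ≤ √(#J : ℝ) * ‖ψ‖ * M + ‖ψ‖ / b :=
        hloc.trans (by gcongr)
    _ ≤ √(k : ℝ) * ‖ψ‖ * M + ‖ψ‖ / b := by gcongr
    _ = (M * √(k : ℝ) + 1 / b) * ‖ψ‖ := by ring

theorem stmt_10 {X : Type*} [MeasurableSpace X] (m : Measure X)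
    (φ : HilbertBasis ℕ ℂ (Lp ℂ 2 m)) (ψ : Lp ℂ 2 m) (hψ : ψ ≠ 0)
    (A : Set X) (hA : MeasurableSet A)
    (lam : ℕ → ℝ) (μ ε b : ℝ) (hε : 0 < ε) (hb : 1 < b) (k : ℕ) (hk : 0 < k)
    (hsum : Summable fun j => ‖(inner ℂ ψ (φ j) : ℂ)‖ ^ 2 * (lam j - μ) ^ 2)
    (hbound : ∑' j, ‖(inner ℂ ψ (φ j) : ℂ)‖ ^ 2 * (lam j - μ) ^ 2 ≤ ε ^ 2 * ‖ψ‖ ^ 2)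
    (hJfin : {j : ℕ | |lam j - μ| ≤ b * ε}.Finite)
    (hJcard : hJfin.toFinset.card ≤ k) :
    ∃ j : ℕ, |lam j - μ| ≤ b * ε ∧
      Real.sqrt (∫ x in A, ‖(φ j) x‖ ^ 2 ∂m)
        ≥ 1 / Real.sqrt k *
            (Real.sqrt (∫ x in A, ‖ψ x‖ ^ 2 ∂m) / ‖ψ‖ - 1 / b) :=
  stmt_10_general m φ ψ hψ A lam μ ε b hε hb k hsum hbound hJfin hJcard
end

section
/- Let a ∈ ℝ, ℓ > 0, δ > 0, integers m, n ≥ 1, K₁, K₂ ≥ 0, and let χ : ℝ → ℝ be twice continuously differentiable with |χ′(x)| ≤ K₁ and |χ″(x)| ≤ K₂ for all x. Define ψ(x,y) = χ((x−a)/ℓ)·sin(πm(x−a)/ℓ)·sin(πny/δ) and μ = π²(m²/ℓ² + n²/δ²). Then ∫_{[a,a+ℓ]×[0,δ]} ( Δψ(x,y) + μ·ψ(x,y) )² dx dy ≤ (2πm·K₁ + K₂)²·δ/(2ℓ³). -/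
/-!
Writing `u = (x - a)/ℓ`, the quasimode separates as `ψ = F(u) · sin(πny/δ)` with
`F = χ · sin(πm ·)`. The `y`-factor solves its Helmholtz equation exactly, and in `F'' + (πm)² F`
the terms in which no derivative falls on `χ` cancel, leaving `χ'' sin + 2πm χ' cos`, which is
at most `2πm K₁ + K₂` in absolute value. Rescaling costs `1/ℓ²`, so the residual squared is at most
`(2πm K₁ + K₂)²/ℓ⁴ · sin²(πny/δ)`, whose integral over the rectangle is `(2πm K₁ + K₂)² δ/(2ℓ³)`.
-/

open Real MeasureTheory

noncomputable def helmholtz (k : ℝ) (f : ℝ → ℝ) (x : ℝ) : ℝ :=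
  deriv (deriv f) x + k ^ 2 * f x

lemma laplacian_add_mul_of_separable (f g : ℝ → ℝ) (k l x y : ℝ) :
    deriv (deriv fun t => f t * g y) x + deriv (deriv fun t => f x * g t) y
        + (k ^ 2 + l ^ 2) * (f x * g y)
      = helmholtz k f x * g y + f x * helmholtz l g y := by
  rw [deriv_mul_const_field', deriv_mul_const_field', deriv_const_mul_field',
    deriv_const_mul_field']
  unfold helmholtz
  ring

lemma deriv_comp_mul_sub (F : ℝ → ℝ) (c a : ℝ) :
    deriv (fun t => F (c * (t - a))) = fun t => c * deriv F (c * (t - a)) := by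
  funext t
  rw [deriv_comp_sub_const (fun s => F (c * s)), deriv_comp_mul_left, smul_eq_mul]

lemma helmholtz_comp_mul_sub (F : ℝ → ℝ) (k c a x : ℝ) :
    helmholtz (c * k) (fun t => F (c * (t - a))) x = c ^ 2 * helmholtz k F (c * (x - a)) := by
  unfold helmholtz
  rw [deriv_comp_mul_sub, deriv_const_mul_field', deriv_comp_mul_sub]
  ring

lemma helmholtz_sin_mul (k y : ℝ) : helmholtz k (fun t => sin (k * t)) y = 0 := by
  have hsin : deriv (fun t => sin (k * t)) = fun t => k * cos (k * t) := by
    funext t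
    rw [deriv_comp_mul_left, Real.deriv_sin, smul_eq_mul]
  unfold helmholtz
  rw [hsin, deriv_const_mul_field']
  dsimp only
  rw [deriv_comp_mul_left, Real.deriv_cos, smul_eq_mul]
  ring

lemma helmholtz_mul_sin_mul {χ : ℝ → ℝ} (h₁ : Differentiable ℝ χ)
    (h₂ : Differentiable ℝ (deriv χ)) (k u : ℝ) :
    helmholtz k (fun t => χ t * sin (k * t)) u
      = deriv (deriv χ) u * sin (k * u) + 2 * k * deriv χ u * cos (k * u) := by
  have hsin (t : ℝ) : HasDerivAt (fun t => sin (k * t)) (cos (k * t) * k) t :=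
    (Real.hasDerivAt_sin _).comp t ((hasDerivAt_id t).const_mul k |>.congr_deriv (mul_one k))
  have hcos (t : ℝ) : HasDerivAt (fun t => cos (k * t)) (-sin (k * t) * k) t :=
    (Real.hasDerivAt_cos _).comp t ((hasDerivAt_id t).const_mul k |>.congr_deriv (mul_one k))
  have hfirst : deriv (fun t => χ t * sin (k * t))
      = fun t => deriv χ t * sin (k * t) + χ t * (cos (k * t) * k) :=
    funext fun t => ((h₁ t).hasDerivAt.mul (hsin t)).deriv
  have hsecond : deriv (fun t => deriv χ t * sin (k * t) + χ t * (cos (k * t) * k)) u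
      = deriv (deriv χ) u * sin (k * u) + deriv χ u * (cos (k * u) * k)
        + (deriv χ u * (cos (k * u) * k) + χ u * (-sin (k * u) * k * k)) :=
    (((h₂ u).hasDerivAt.mul (hsin u)).add ((h₁ u).hasDerivAt.mul ((hcos u).mul_const k))).deriv
  unfold helmholtz
  rw [hfirst, hsecond]
  ring

lemma abs_helmholtz_mul_sin_mul_le {χ : ℝ → ℝ} (hχ : ContDiff ℝ 2 χ) {k K₁ K₂ : ℝ}
    (hk : 0 ≤ k) (hχ' : ∀ x, |deriv χ x| ≤ K₁) (hχ'' : ∀ x, |deriv (deriv χ) x| ≤ K₂) (u : ℝ) :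
    |helmholtz k (fun t => χ t * sin (k * t)) u| ≤ 2 * k * K₁ + K₂ := by
  rw [helmholtz_mul_sin_mul (hχ.differentiable two_ne_zero)
    ((hχ.iterate_deriv' 1 1).differentiable one_ne_zero)]
  have hsin : |deriv (deriv χ) u * sin (k * u)| ≤ K₂ := by
    rw [abs_mul]
    exact (mul_le_of_le_one_right (abs_nonneg _) (abs_sin_le_one _)).trans (hχ'' u)
  have hcos : |2 * k * deriv χ u * cos (k * u)| ≤ 2 * k * K₁ := by
    rw [abs_mul, abs_mul, abs_of_nonneg (by positivity : (0 : ℝ) ≤ 2 * k), mul_assoc]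
    exact mul_le_mul_of_nonneg_left
      ((mul_le_of_le_one_right (abs_nonneg _) (abs_cos_le_one _)).trans (hχ' u)) (by positivity)
  linarith [abs_add_le (deriv (deriv χ) u * sin (k * u)) (2 * k * deriv χ u * cos (k * u))]

lemma setIntegral_Icc_sin_sq_nat_mul_pi_div {n : ℕ} (hn : n ≠ 0) {δ : ℝ} (hδ : 0 < δ) :
    ∫ y in Set.Icc 0 δ, sin (π * n / δ * y) ^ 2 = δ / 2 := by
  have hk : π * n / δ ≠ 0 := by positivity
  rw [integral_Icc_eq_integral_Ioc, ← intervalIntegral.integral_of_le hδ.le,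
    intervalIntegral.integral_comp_mul_left (fun u => sin u ^ 2) hk, integral_sin_sq,
    mul_zero, div_mul_cancel₀ _ hδ.ne', mul_comm, sin_nat_mul_pi, sin_zero, smul_eq_mul]
  field_simp
  ring

lemma setIntegral_Icc_sq_le_of_abs_le {f : ℝ → ℝ} {a b C : ℝ} (hab : a ≤ b)
    (hf : ∀ x, |f x| ≤ C) : ∫ x in Set.Icc a b, f x ^ 2 ≤ C ^ 2 * (b - a) := by
  have hnorm := norm_setIntegral_le_of_norm_le_const (μ := volume) (s := Set.Icc a b)
    (f := fun x => f x ^ 2) measure_Icc_lt_top (C := C ^ 2)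
    fun x _ => by simpa [Real.norm_eq_abs, abs_pow, sq_abs] using
      pow_le_pow_left₀ (abs_nonneg _) (hf x) 2
  rw [Real.volume_real_Icc_of_le hab] at hnorm
  exact (le_abs_self _).trans hnorm

theorem stmt_12_general (a ℓ δ : ℝ) (hℓ : 0 < ℓ) (hδ : 0 < δ)
    (m n : ℕ) (hn : 1 ≤ n)
    (K₁ K₂ : ℝ)
    (χ : ℝ → ℝ) (hχ : ContDiff ℝ 2 χ)
    (hχ' : ∀ x, |deriv χ x| ≤ K₁) (hχ'' : ∀ x, |deriv (deriv χ) x| ≤ K₂)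
    (ψ : ℝ → ℝ → ℝ)
    (hψ : ∀ x y, ψ x y =
      χ ((x - a) / ℓ) * Real.sin (π * m * (x - a) / ℓ) * Real.sin (π * n * y / δ))
    (μ : ℝ) (hμ : μ = π ^ 2 * ((m : ℝ) ^ 2 / ℓ ^ 2 + (n : ℝ) ^ 2 / δ ^ 2)) :
    ∫ z in Set.Icc a (a + ℓ) ×ˢ Set.Icc (0 : ℝ) δ,
        (deriv (deriv fun t => ψ t z.2) z.1 + deriv (deriv fun t => ψ z.1 t) z.2
          + μ * ψ z.1 z.2) ^ 2
      ≤ (2 * π * m * K₁ + K₂) ^ 2 * δ / (2 * ℓ ^ 3) := by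
  set F : ℝ → ℝ := fun u => χ u * sin (π * m * u)
  set g : ℝ → ℝ := fun y => sin (π * n / δ * y)
  set B : ℝ → ℝ := fun x => ℓ⁻¹ ^ 2 * helmholtz (π * m) F (ℓ⁻¹ * (x - a))
  have hψ_sep : ψ = fun x y => F (ℓ⁻¹ * (x - a)) * g y := by
    funext x y
    rw [hψ]
    simp only [F, g]
    ring_nf
  have hμ_sep : μ = (ℓ⁻¹ * (π * m)) ^ 2 + (π * n / δ) ^ 2 := by
    rw [hμ]
    ring
  have hresidual (z : ℝ × ℝ) : deriv (deriv fun t => ψ t z.2) z.1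
      + deriv (deriv fun t => ψ z.1 t) z.2 + μ * ψ z.1 z.2 = B z.1 * g z.2 := by
    rw [hψ_sep, hμ_sep, laplacian_add_mul_of_separable, helmholtz_sin_mul,
      helmholtz_comp_mul_sub]
    ring
  have hB (x : ℝ) : |B x| ≤ ℓ⁻¹ ^ 2 * (2 * π * m * K₁ + K₂) := by
    rw [abs_mul, abs_of_nonneg (by positivity)]
    gcongr
    exact (abs_helmholtz_mul_sin_mul_le hχ (by positivity) hχ' hχ'' _).trans_eq (by ring)
  simp only [hresidual, mul_pow]
  rw [Measure.volume_eq_prod, setIntegral_prod_mul (fun x => B x ^ 2) (fun y => g y ^ 2),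
    setIntegral_Icc_sin_sq_nat_mul_pi_div (by omega) hδ]
  calc (∫ x in Set.Icc a (a + ℓ), B x ^ 2) * (δ / 2)
      ≤ (ℓ⁻¹ ^ 2 * (2 * π * m * K₁ + K₂)) ^ 2 * (a + ℓ - a) * (δ / 2) := by
        gcongr
        exact setIntegral_Icc_sq_le_of_abs_le (by linarith) hB
    _ = (2 * π * m * K₁ + K₂) ^ 2 * δ / (2 * ℓ ^ 3) := by
        field_simp
        ring

theorem stmt_12 (a ℓ δ : ℝ) (hℓ : 0 < ℓ) (hδ : 0 < δ)
    (m n : ℕ) (hm : 1 ≤ m) (hn : 1 ≤ n)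
    (K₁ K₂ : ℝ) (hK₁ : 0 ≤ K₁) (hK₂ : 0 ≤ K₂)
    (χ : ℝ → ℝ) (hχ : ContDiff ℝ 2 χ)
    (hχ' : ∀ x, |deriv χ x| ≤ K₁) (hχ'' : ∀ x, |deriv (deriv χ) x| ≤ K₂)
    (ψ : ℝ → ℝ → ℝ)
    (hψ : ∀ x y, ψ x y =
      χ ((x - a) / ℓ) * Real.sin (π * m * (x - a) / ℓ) * Real.sin (π * n * y / δ))
    (μ : ℝ) (hμ : μ = π ^ 2 * ((m : ℝ) ^ 2 / ℓ ^ 2 + (n : ℝ) ^ 2 / δ ^ 2)) :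
    ∫ z in Set.Icc a (a + ℓ) ×ˢ Set.Icc (0 : ℝ) δ,
        (deriv (deriv fun t => ψ t z.2) z.1 + deriv (deriv fun t => ψ z.1 t) z.2
          + μ * ψ z.1 z.2) ^ 2
      ≤ (2 * π * m * K₁ + K₂) ^ 2 * δ / (2 * ℓ ^ 3) :=
  stmt_12_general a ℓ δ hℓ hδ m n hn K₁ K₂ χ hχ hχ' hχ'' ψ hψ μ hμ
end

section
/- Let a ∈ ℝ, ℓ > 0, δ > 0, integers m, n ≥ 1, 0 < ε < 1/2, and let χ : ℝ → ℝ be continuous with 0 ≤ χ(x) ≤ 1 for all x and χ(x) = 1 for all x ∈ [ε, 1−ε]. Define ψ(x,y) = χ((x−a)/ℓ)·sin(πm(x−a)/ℓ)·sin(πny/δ). Then (ℓδ/4)·(1 − 4ε) ≤ ∫_{[a,a+ℓ]×[0,δ]} ψ(x,y)² dx dy ≤ ℓδ/4. -/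
open Real MeasureTheory

/-!
The integrand factors as `F(x) G(y)`, so by Fubini the integral is a product of two
one-dimensional integrals, and rescaling both intervals to `[0, 1]` reduces everything to
`∫₀¹ sin² (π k u) du = 1/2` (for `k ≥ 1`). Since `0 ≤ χ ≤ 1`, the `x`-factor is at most that of
`sin²`; since `χ = 1` on `[ε, 1 - ε]` and `sin² ≤ 1`, it falls short of it by at most `2ε`.
-/

theorem integral_sin_sq_pi_nat_mul {k : ℕ} (hk : k ≠ 0) :
    ∫ u in (0 : ℝ)..1, sin (π * k * u) ^ 2 = 1 / 2 := by
  have hc : π * k ≠ 0 := by positivity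
  rw [intervalIntegral.integral_comp_mul_left (fun x => sin x ^ 2) hc, integral_sin_sq,
    mul_one, mul_zero, mul_comm π, sin_nat_mul_pi, sin_zero, smul_eq_mul]
  field_simp
  ring

theorem setIntegral_Icc_comp_sub_div (g : ℝ → ℝ) (a : ℝ) {ℓ : ℝ} (hℓ : 0 < ℓ) :
    ∫ x in Set.Icc a (a + ℓ), g ((x - a) / ℓ) = ℓ * ∫ u in (0 : ℝ)..1, g u := by
  rw [integral_Icc_eq_integral_Ioc, ← intervalIntegral.integral_of_le (by linarith),
    intervalIntegral.integral_comp_sub_right (fun t => g (t / ℓ)),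
    intervalIntegral.integral_comp_div g hℓ.ne', smul_eq_mul]
  simp [hℓ.ne']

section Cutoff

variable {χ : ℝ → ℝ} {k : ℕ}

theorem integral_cutoff_mul_sin_sq_le (hk : k ≠ 0) (hχ_nonneg : ∀ x, 0 ≤ χ x)
    (hχ_le : ∀ x, χ x ≤ 1) (hχ_cont : Continuous χ) :
    ∫ u in (0 : ℝ)..1, (χ u * sin (π * k * u)) ^ 2 ≤ 1 / 2 := by
  rw [← integral_sin_sq_pi_nat_mul hk]
  refine intervalIntegral.integral_mono_on zero_le_one
    (Continuous.intervalIntegrable (by fun_prop) _ _)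
    (Continuous.intervalIntegrable (by fun_prop) _ _) fun u _ => ?_
  rw [mul_pow]
  exact mul_le_of_le_one_left (sq_nonneg _) (pow_le_one₀ (hχ_nonneg u) (hχ_le u))

theorem half_sub_two_mul_le_integral_cutoff_mul_sin_sq (hk : k ≠ 0) {ε : ℝ} (hε : 0 < ε)
    (hε' : ε < 1 / 2) (hχ_one : ∀ x ∈ Set.Icc ε (1 - ε), χ x = 1) (hχ_cont : Continuous χ) :
    1 / 2 - 2 * ε ≤ ∫ u in (0 : ℝ)..1, (χ u * sin (π * k * u)) ^ 2 := by
  set S : ℝ → ℝ := fun u => sin (π * k * u) ^ 2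
  have hS : ∀ b c, IntervalIntegrable S volume b c :=
    Continuous.intervalIntegrable (by fun_prop)
  have hS_le : ∀ b c, b ≤ c → ∫ u in b..c, S u ≤ c - b := fun b c hbc => by
    simpa using intervalIntegral.integral_mono_on hbc (hS b c) intervalIntegrable_const
      fun u _ => sin_sq_le_one (π * k * u)
  have hS_total : (∫ u in (0 : ℝ)..ε, S u) + (∫ u in ε..1 - ε, S u) + ∫ u in 1 - ε..1, S u
      = 1 / 2 := by
    rw [intervalIntegral.integral_add_adjacent_intervals (hS _ _) (hS _ _),
      intervalIntegral.integral_add_adjacent_intervals (hS _ _) (hS _ _)]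
    exact integral_sin_sq_pi_nat_mul hk
  have hmid : ∫ u in ε..1 - ε, (χ u * sin (π * k * u)) ^ 2 = ∫ u in ε..1 - ε, S u := by
    refine intervalIntegral.integral_congr fun u hu => ?_
    rw [Set.uIcc_of_le (by linarith)] at hu
    simp [S, hχ_one u hu]
  have hsub : ∫ u in ε..1 - ε, (χ u * sin (π * k * u)) ^ 2
      ≤ ∫ u in (0 : ℝ)..1, (χ u * sin (π * k * u)) ^ 2 :=
    intervalIntegral.integral_mono_interval hε.le (by linarith) (by linarith)
      (Filter.Eventually.of_forall fun u => sq_nonneg _)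
      (Continuous.intervalIntegrable (by fun_prop) _ _)
  linarith [hS_le 0 ε hε.le, hS_le (1 - ε) 1 (by linarith)]

end Cutoff

theorem stmt_13 (a ℓ δ : ℝ) (hℓ : 0 < ℓ) (hδ : 0 < δ)
    (m n : ℕ) (hm : 1 ≤ m) (hn : 1 ≤ n)
    (ε : ℝ) (hε : 0 < ε) (hε' : ε < 1 / 2)
    (χ : ℝ → ℝ) (hχ_cont : Continuous χ)
    (hχ_nonneg : ∀ x, 0 ≤ χ x) (hχ_le : ∀ x, χ x ≤ 1)
    (hχ_one : ∀ x ∈ Set.Icc ε (1 - ε), χ x = 1)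
    (ψ : ℝ → ℝ → ℝ)
    (hψ : ∀ x y, ψ x y =
      χ ((x - a) / ℓ) * Real.sin (π * m * (x - a) / ℓ) * Real.sin (π * n * y / δ)) :
    ℓ * δ / 4 * (1 - 4 * ε)
      ≤ ∫ z in Set.Icc a (a + ℓ) ×ˢ Set.Icc (0 : ℝ) δ, (ψ z.1 z.2) ^ 2
    ∧ ∫ z in Set.Icc a (a + ℓ) ×ˢ Set.Icc (0 : ℝ) δ, (ψ z.1 z.2) ^ 2 ≤ ℓ * δ / 4 := by
  set I := ∫ u in (0 : ℝ)..1, (χ u * sin (π * m * u)) ^ 2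
  have hx : ∫ x in Set.Icc a (a + ℓ), (χ ((x - a) / ℓ) * sin (π * m * (x - a) / ℓ)) ^ 2
      = ℓ * I := by
    simp_rw [mul_div_assoc]
    exact setIntegral_Icc_comp_sub_div (fun u => (χ u * sin (π * m * u)) ^ 2) a hℓ
  have hy : ∫ y in Set.Icc (0 : ℝ) δ, sin (π * n * y / δ) ^ 2 = δ / 2 := by
    have h := setIntegral_Icc_comp_sub_div (fun u => sin (π * n * u) ^ 2) 0 hδ
    simp only [zero_add, sub_zero, ← mul_div_assoc,
      integral_sin_sq_pi_nat_mul (by omega : n ≠ 0)] at h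
    rw [h, mul_one]
  have hsplit : ∫ z in Set.Icc a (a + ℓ) ×ˢ Set.Icc (0 : ℝ) δ, (ψ z.1 z.2) ^ 2
      = ℓ * I * (δ / 2) := by
    have hψ_sq : ∀ x y, ψ x y ^ 2
        = (χ ((x - a) / ℓ) * sin (π * m * (x - a) / ℓ)) ^ 2 * sin (π * n * y / δ) ^ 2 :=
      fun x y => by rw [hψ, mul_pow]
    simp_rw [hψ_sq]
    rw [Measure.volume_eq_prod, setIntegral_prod_mul
      (fun x => (χ ((x - a) / ℓ) * sin (π * m * (x - a) / ℓ)) ^ 2)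
      (fun y => sin (π * n * y / δ) ^ 2), hx, hy]
  have hI_le := integral_cutoff_mul_sin_sq_le (by omega : m ≠ 0) hχ_nonneg hχ_le hχ_cont
  have hI_ge :=
    half_sub_two_mul_le_integral_cutoff_mul_sin_sq (by omega : m ≠ 0) hε hε' hχ_one hχ_cont
  rw [hsplit]
  constructor <;> nlinarith [mul_pos hℓ hδ]
end

section
/- Let a ∈ ℝ, ℓ > 0, δ > 0, integers m, m', n ≥ 1 with m ≠ m', 0 < ε < 1/2, and let χ : ℝ → ℝ be continuous with 0 ≤ χ(x) ≤ 1 for all x and χ(x) = 1 for all x ∈ [ε, 1−ε]. Define ψ_{m,n}(x,y) = χ((x−a)/ℓ)·sin(πm(x−a)/ℓ)·sin(πny/δ) and similarly ψ_{m',n}. Then | ∫_{[a,a+ℓ]×[0,δ]} ψ_{m,n}(x,y)·ψ_{m',n}(x,y) dx dy | ≤ ε·ℓ·δ. -/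
/-!
The integrand separates as `χ(t)² sin(πm t) sin(πm' t) · sin²(πny/δ)` with `t = (x - a)/ℓ`,
and the `y`-integral is `δ/2`. Since the two sines are orthogonal on `[a, a + ℓ]`, the
`x`-integral does not change when `χ²` is replaced by `χ² - 1`; this function has modulus at
most `1` and vanishes on `[a + εℓ, a + (1 - ε)ℓ]`, so only the two end intervals of length `εℓ`
contribute.
-/

open Real MeasureTheory intervalIntegral Set

lemma integral_cos_pi_int_mul_eq_zero {k : ℤ} (hk : k ≠ 0) {ℓ : ℝ} (hℓ : ℓ ≠ 0) (a : ℝ) :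
    ∫ x in a..a + ℓ, cos (π * k * (x - a) / ℓ) = 0 := by
  have hc : π * k / ℓ ≠ 0 := by positivity
  have harg : ∀ x, π * k * (x - a) / ℓ = π * k / ℓ * x - π * k / ℓ * a := fun x => by ring
  simp_rw [harg]
  rw [integral_comp_mul_sub (fun x => cos x) hc, integral_cos, sub_self]
  have hend : π * k / ℓ * (a + ℓ) - π * k / ℓ * a = k * π := by field_simp; ring
  rw [hend, sin_int_mul_pi, sin_zero, sub_zero, smul_zero]

lemma integral_sin_mul_sin_eq_zero {m m' : ℕ} (hmm' : m ≠ m') {ℓ : ℝ} (hℓ : ℓ ≠ 0) (a : ℝ) :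
    ∫ x in a..a + ℓ, sin (π * m * (x - a) / ℓ) * sin (π * m' * (x - a) / ℓ) = 0 := by
  have hdiff : ((m : ℤ) - m') ≠ 0 := sub_ne_zero.mpr (by exact_mod_cast hmm')
  have hsum : ((m : ℤ) + m') ≠ 0 := by omega
  have hprod : ∀ x, sin (π * m * (x - a) / ℓ) * sin (π * m' * (x - a) / ℓ) =
      (cos (π * ((m - m' : ℤ) : ℝ) * (x - a) / ℓ) -
        cos (π * ((m + m' : ℤ) : ℝ) * (x - a) / ℓ)) / 2 := fun x => by
    rw [eq_div_iff two_ne_zero, mul_comm, ← mul_assoc, two_mul_sin_mul_sin]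
    push_cast
    ring_nf
  have hint : ∀ k : ℤ, IntervalIntegrable (fun x => cos (π * k * (x - a) / ℓ)) volume a (a + ℓ) :=
    fun k => by apply Continuous.intervalIntegrable; fun_prop
  simp_rw [hprod]
  rw [intervalIntegral.integral_div, integral_sub (hint _) (hint _),
    integral_cos_pi_int_mul_eq_zero hdiff hℓ, integral_cos_pi_int_mul_eq_zero hsum hℓ,
    sub_zero, zero_div]

lemma integral_sin_sq_pi_nat_mul_div {n : ℕ} (hn : n ≠ 0) {δ : ℝ} (hδ : δ ≠ 0) :
    ∫ y in (0 : ℝ)..δ, sin (π * n * y / δ) ^ 2 = δ / 2 := by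
  have h2n : ((2 * n : ℕ) : ℤ) ≠ 0 := by omega
  have hsq : ∀ y, sin (π * n * y / δ) ^ 2 = (1 - cos (π * ((2 * n : ℕ) : ℤ) * (y - 0) / δ)) / 2 :=
    fun y => by rw [sin_sq_eq_half_sub]; push_cast; ring_nf
  have hcos := integral_cos_pi_int_mul_eq_zero h2n hδ 0
  rw [zero_add] at hcos
  simp_rw [hsq]
  rw [intervalIntegral.integral_div, integral_sub intervalIntegrable_const
    (by apply Continuous.intervalIntegrable; fun_prop), hcos, intervalIntegral.integral_const]
  simp

lemma abs_integral_le_of_eq_zero_on_Icc {f : ℝ → ℝ} {a b c d C : ℝ}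
    (hab : a ≤ b) (hbc : b ≤ c) (hcd : c ≤ d) (hf : IntervalIntegrable f volume a d)
    (hbound : ∀ x ∈ Icc a d, |f x| ≤ C) (hzero : ∀ x ∈ Icc b c, f x = 0) :
    |∫ x in a..d, f x| ≤ C * ((b - a) + (d - c)) := by
  have hsub : ∀ {u v}, a ≤ u → u ≤ v → v ≤ d → IntervalIntegrable f volume u v := fun hu huv hv =>
    hf.mono_set (by rw [uIcc_of_le huv, uIcc_of_le (by linarith)]; exact Icc_subset_Icc hu hv)
  have hpiece : ∀ u v, a ≤ u → u ≤ v → v ≤ d → |∫ x in u..v, f x| ≤ C * (v - u) :=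
    fun u v hu huv hv => by
      have := intervalIntegral.norm_integral_le_of_norm_le_const (a := u) (b := v) (f := f) (C := C)
        fun x hx => by
          rw [uIoc_of_le huv] at hx
          exact hbound x ⟨by linarith [hx.1], by linarith [hx.2]⟩
      rwa [Real.norm_eq_abs, abs_of_nonneg (sub_nonneg.mpr huv)] at this
  have hmid : ∫ x in b..c, f x = 0 := by
    rw [integral_congr (g := fun _ => 0) (fun x hx => hzero x (uIcc_of_le hbc ▸ hx))]
    exact integral_zero
  rw [← integral_add_adjacent_intervals (hsub le_rfl (hab.trans hbc) (by linarith))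
      (hsub (hab.trans hbc) hcd le_rfl),
    ← integral_add_adjacent_intervals (hsub le_rfl hab (by linarith)) (hsub hab hbc (by linarith)),
    hmid, add_zero]
  calc |(∫ x in a..b, f x) + ∫ x in c..d, f x|
      ≤ |∫ x in a..b, f x| + |∫ x in c..d, f x| := abs_add_le _ _
    _ ≤ C * (b - a) + C * (d - c) :=
        add_le_add (hpiece a b le_rfl hab (by linarith)) (hpiece c d (by linarith) hcd le_rfl)
    _ = C * ((b - a) + (d - c)) := by ring

lemma abs_integral_cutoff_sq_mul_sin_mul_sin_le {χ : ℝ → ℝ} {ε : ℝ} (hχ_cont : Continuous χ)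
    (hχ_nonneg : ∀ x, 0 ≤ χ x) (hχ_le : ∀ x, χ x ≤ 1) (hχ_one : ∀ x ∈ Icc ε (1 - ε), χ x = 1)
    (hε : 0 ≤ ε) (hε' : ε ≤ 1 / 2) {m m' : ℕ} (hmm' : m ≠ m') {ℓ : ℝ} (hℓ : 0 < ℓ) (a : ℝ) :
    |∫ x in a..a + ℓ,
        χ ((x - a) / ℓ) ^ 2 * (sin (π * m * (x - a) / ℓ) * sin (π * m' * (x - a) / ℓ))|
      ≤ 2 * ε * ℓ := by
  set S : ℝ → ℝ := fun x => sin (π * m * (x - a) / ℓ) * sin (π * m' * (x - a) / ℓ) with hS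
  set D : ℝ → ℝ := fun x => (χ ((x - a) / ℓ) ^ 2 - 1) * S x with hD
  have hreduce : ∫ x in a..a + ℓ, χ ((x - a) / ℓ) ^ 2 * S x = ∫ x in a..a + ℓ, D x := by
    have hsplit : ∀ x, χ ((x - a) / ℓ) ^ 2 * S x = D x + S x := fun x => by simp only [hD]; ring
    simp_rw [hsplit]
    rw [intervalIntegral.integral_add (by apply Continuous.intervalIntegrable; fun_prop)
      (by apply Continuous.intervalIntegrable; fun_prop),
      integral_sin_mul_sin_eq_zero hmm' hℓ.ne', add_zero]
  have hbound : ∀ x, |D x| ≤ 1 := fun x => by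
    have hχ2 : |χ ((x - a) / ℓ) ^ 2 - 1| ≤ 1 := by
      have := hχ_nonneg ((x - a) / ℓ)
      have := hχ_le ((x - a) / ℓ)
      rw [abs_le]; constructor <;> nlinarith
    have hS1 : |S x| ≤ 1 := by
      rw [hS, abs_mul]
      exact mul_le_one₀ (abs_sin_le_one _) (abs_nonneg _) (abs_sin_le_one _)
    rw [hD, abs_mul]
    exact mul_le_one₀ hχ2 (abs_nonneg _) hS1
  have hzero : ∀ x ∈ Icc (a + ε * ℓ) (a + (1 - ε) * ℓ), D x = 0 := fun x hx => by
    have ht : (x - a) / ℓ ∈ Icc ε (1 - ε) :=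
      ⟨(le_div_iff₀ hℓ).mpr (by linarith [hx.1]), (div_le_iff₀ hℓ).mpr (by linarith [hx.2])⟩
    simp only [hD, hχ_one _ ht, one_pow, sub_self, zero_mul]
  rw [hreduce]
  calc |∫ x in a..a + ℓ, D x|
      ≤ 1 * ((a + ε * ℓ - a) + (a + ℓ - (a + (1 - ε) * ℓ))) :=
        abs_integral_le_of_eq_zero_on_Icc (by nlinarith) (by nlinarith) (by nlinarith)
          (by apply Continuous.intervalIntegrable; fun_prop) (fun x _ => hbound x) hzero
    _ = 2 * ε * ℓ := by ring

theorem stmt_14_general (a ℓ δ : ℝ) (hℓ : 0 < ℓ) (hδ : 0 < δ)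
    (m m' n : ℕ) (hn : 1 ≤ n) (hmm' : m ≠ m')
    (ε : ℝ) (hε : 0 < ε) (hε' : ε < 1 / 2)
    (χ : ℝ → ℝ) (hχ_cont : Continuous χ)
    (hχ_nonneg : ∀ x, 0 ≤ χ x) (hχ_le : ∀ x, χ x ≤ 1)
    (hχ_one : ∀ x ∈ Set.Icc ε (1 - ε), χ x = 1)
    (ψ ψ' : ℝ → ℝ → ℝ)
    (hψ : ∀ x y, ψ x y =
      χ ((x - a) / ℓ) * Real.sin (π * m * (x - a) / ℓ) * Real.sin (π * n * y / δ))
    (hψ' : ∀ x y, ψ' x y =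
      χ ((x - a) / ℓ) * Real.sin (π * m' * (x - a) / ℓ) * Real.sin (π * n * y / δ)) :
    |∫ z in Set.Icc a (a + ℓ) ×ˢ Set.Icc (0 : ℝ) δ, ψ z.1 z.2 * ψ' z.1 z.2|
      ≤ ε * ℓ * δ := by
  set F : ℝ → ℝ := fun x =>
    χ ((x - a) / ℓ) ^ 2 * (sin (π * m * (x - a) / ℓ) * sin (π * m' * (x - a) / ℓ))
  set G : ℝ → ℝ := fun y => sin (π * n * y / δ) ^ 2
  have hsep : (fun z : ℝ × ℝ => ψ z.1 z.2 * ψ' z.1 z.2) = fun z => F z.1 * G z.2 := by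
    funext z; rw [hψ, hψ']; ring
  rw [hsep, Measure.volume_eq_prod, setIntegral_prod_mul,
    integral_Icc_eq_integral_Ioc, ← integral_of_le (by linarith),
    integral_Icc_eq_integral_Ioc, ← integral_of_le hδ.le,
    integral_sin_sq_pi_nat_mul_div (by omega) hδ.ne', abs_mul, abs_of_pos (half_pos hδ)]
  calc |∫ x in a..a + ℓ, F x| * (δ / 2) ≤ 2 * ε * ℓ * (δ / 2) := by
        gcongr
        exact abs_integral_cutoff_sq_mul_sin_mul_sin_le hχ_cont hχ_nonneg hχ_le hχ_one hε.le
          hε'.le hmm' hℓ a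
    _ = ε * ℓ * δ := by ring

theorem stmt_14 (a ℓ δ : ℝ) (hℓ : 0 < ℓ) (hδ : 0 < δ)
    (m m' n : ℕ) (hm : 1 ≤ m) (hm' : 1 ≤ m') (hn : 1 ≤ n) (hmm' : m ≠ m')
    (ε : ℝ) (hε : 0 < ε) (hε' : ε < 1 / 2)
    (χ : ℝ → ℝ) (hχ_cont : Continuous χ)
    (hχ_nonneg : ∀ x, 0 ≤ χ x) (hχ_le : ∀ x, χ x ≤ 1)
    (hχ_one : ∀ x ∈ Set.Icc ε (1 - ε), χ x = 1)
    (ψ ψ' : ℝ → ℝ → ℝ)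
    (hψ : ∀ x y, ψ x y =
      χ ((x - a) / ℓ) * Real.sin (π * m * (x - a) / ℓ) * Real.sin (π * n * y / δ))
    (hψ' : ∀ x y, ψ' x y =
      χ ((x - a) / ℓ) * Real.sin (π * m' * (x - a) / ℓ) * Real.sin (π * n * y / δ)) :
    |∫ z in Set.Icc a (a + ℓ) ×ˢ Set.Icc (0 : ℝ) δ, ψ z.1 z.2 * ψ' z.1 z.2|
      ≤ ε * ℓ * δ :=
  stmt_14_general a ℓ δ hℓ hδ m m' n hn hmm' ε hε hε' χ hχ_cont hχ_nonneg hχ_le hχ_one ψ ψ' hψ hψ'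
end
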